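/- arXiv:2604.16618 — 4 statements merged into one kernel-verified Lean document; each statement's English description precedes it below -/
import Mathlib

section
/- Let γ = (γ₁,…,γ₅) : [a,b] → ℝ⁵ be a horizontal curve and let s, t ∈ [a,b] with s < t. If γ₁′ ≥ 0 almost everywhere on [s,t], then γ₅(t) − γ₅(s) ≤ (1/2)γ₁(t)(γ₂(t))² − (1/2)γ₁(s)(γ₂(s))². -/
open MeasureTheory

/-- `γ` is absolutely continuous on `[a,b]` with a.e. derivative `g`:
each component of `g` is integrable and `γ` is recovered from `g` by integration. -/
def IsACOn (a b : ℝ) (γ g : ℝ → Fin 5 → ℝ) : Prop :=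
  (∀ i : Fin 5, IntervalIntegrable (fun t => g t i) volume a b) ∧
  ∀ t ∈ Set.Icc a b, ∀ i : Fin 5, γ t i = γ a i + ∫ s in a..t, g s i

/-- `γ` is a horizontal curve on `[a,b]` (with a.e. derivative `g`) in the free Carnot group
of step 3 with 2 generators, in exponential coordinates of the second kind:
`γ₃' = -γ₂'γ₁`, `γ₄' = (1/2)γ₂'γ₁²`, `γ₅' = γ₂'γ₁γ₂` a.e. on `[a,b]`. -/
def IsHorizontalOn (a b : ℝ) (γ g : ℝ → Fin 5 → ℝ) : Prop :=
  IsACOn a b γ g ∧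
  ∀ᵐ t ∂volume, t ∈ Set.Icc a b →
    (g t 2 = -(g t 1) * γ t 0 ∧
     g t 3 = (1 / 2) * g t 1 * (γ t 0) ^ 2 ∧
     g t 4 = g t 1 * γ t 0 * γ t 1)

open Set in

lemma myBddMul {s t : ℝ} {f φ : ℝ → ℝ} (hf : IntegrableOn f (Set.Ioc s t))
    (hφ : ContinuousOn φ (Set.Icc s t)) :
    IntegrableOn (fun x => φ x * f x) (Set.Ioc s t) := by
  obtain ⟨C, hC⟩ := (isCompact_Icc : IsCompact (Set.Icc s t)).exists_bound_of_continuousOn hφ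
  refine hf.bdd_mul (c := C)
    ((hφ.mono Set.Ioc_subset_Icc_self).aestronglyMeasurable measurableSet_Ioc) ?_
  filter_upwards [ae_restrict_mem measurableSet_Ioc] with x hx
  exact hC x (Set.Ioc_subset_Icc_self hx)

lemma myParts {s t : ℝ} (hst : s ≤ t) {f h u v : ℝ → ℝ}
    (hf : IntegrableOn f (Set.Ioc s t)) (hh : IntegrableOn h (Set.Ioc s t))
    (hu : ∀ x ∈ Set.Icc s t, u x = u s + ∫ y in Set.Ioc s x, f y)
    (hv : ∀ x ∈ Set.Icc s t, v x = v s + ∫ y in Set.Ioc s x, h y) :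
    u t * v t - u s * v s = ∫ x in Set.Ioc s t, (f x * v x + u x * h x) := by
  set U : ℝ → ℝ := fun x => ∫ y in Set.Ioc s x, f y with hU
  set V : ℝ → ℝ := fun x => ∫ y in Set.Ioc s x, h y with hV
  have hfIcc : IntegrableOn f (Set.Icc s t) := by
    rwa [integrableOn_Icc_iff_integrableOn_Ioc]
  have hhIcc : IntegrableOn h (Set.Icc s t) := by
    rwa [integrableOn_Icc_iff_integrableOn_Ioc]
  have Ucont : ContinuousOn U (Set.Icc s t) := intervalIntegral.continuousOn_primitive hfIcc
  have Vcont : ContinuousOn V (Set.Icc s t) := intervalIntegral.continuousOn_primitive hhIcc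
  have ucont : ContinuousOn u (Set.Icc s t) := (continuousOn_const.add Ucont).congr hu
  have vcont : ContinuousOn v (Set.Icc s t) := (continuousOn_const.add Vcont).congr hv
  have hfV : IntegrableOn (fun x => f x * V x) (Set.Ioc s t) := by
    have := myBddMul hf Vcont
    simpa [mul_comm] using this
  have hUh : IntegrableOn (fun x => U x * h x) (Set.Ioc s t) := myBddMul hh Ucont
  -- Fubini core
  have core : (∫ x in Set.Ioc s t, f x * V x) + ∫ x in Set.Ioc s t, U x * h x = U t * V t := by
    set S : Set (ℝ × ℝ) := {p | p.2 ≤ p.1} with hS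
    have hSm : MeasurableSet S := measurableSet_le measurable_snd measurable_fst
    set F : ℝ × ℝ → ℝ := S.indicator (fun p => f p.1 * h p.2) with hF
    have hFint : Integrable F
        ((volume.restrict (Set.Ioc s t)).prod (volume.restrict (Set.Ioc s t))) :=
      (hf.mul_prod hh).indicator hSm
    have swap : (∫ x in Set.Ioc s t, ∫ y in Set.Ioc s t, F (x, y))
        = ∫ y in Set.Ioc s t, ∫ x in Set.Ioc s t, F (x, y) :=
      integral_integral_swap hFint
    have inner1 : ∀ x ∈ Set.Ioc s t, (∫ y in Set.Ioc s t, F (x, y)) = f x * V x := by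
      intro x hx
      have e : (fun y => F (x, y)) = (Set.Iic x).indicator (fun y => f x * h y) := by
        funext y
        by_cases hy : y ≤ x <;> simp [hF, hS, Set.indicator, hy]
      rw [e, setIntegral_indicator measurableSet_Iic, Set.Ioc_inter_Iic,
        min_eq_right hx.2, integral_const_mul]
    have inner2 : ∀ y ∈ Set.Ioc s t, (∫ x in Set.Ioc s t, F (x, y)) = (U t - U y) * h y := by
      intro y hy
      have e : (fun x => F (x, y)) = (Set.Ici y).indicator (fun x => f x * h y) := by
        funext x
        by_cases hxy : y ≤ x <;> simp [hF, hS, Set.indicator, hxy]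
      have hset : Set.Ioc s t ∩ Set.Ici y = Set.Icc y t := by
        ext z
        simp only [Set.mem_inter_iff, Set.mem_Ioc, Set.mem_Ici, Set.mem_Icc]
        constructor
        · rintro ⟨⟨_, h2⟩, h3⟩; exact ⟨h3, h2⟩
        · rintro ⟨h1, h2⟩; exact ⟨⟨lt_of_lt_of_le hy.1 h1, h2⟩, h1⟩
      have hadd : U t = U y + ∫ x in Set.Ioc y t, f x := by
        rw [hU]
        rw [← setIntegral_union (Set.Ioc_disjoint_Ioc_of_le le_rfl) measurableSet_Ioc
          (hf.mono_set (Set.Ioc_subset_Ioc_right hy.2))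
          (hf.mono_set (Set.Ioc_subset_Ioc_left hy.1.le)),
          Set.Ioc_union_Ioc_eq_Ioc hy.1.le hy.2]
      rw [e, setIntegral_indicator measurableSet_Ici, hset, integral_mul_const,
        integral_Icc_eq_integral_Ioc]
      rw [hadd]; ring
    rw [setIntegral_congr_fun measurableSet_Ioc inner1,
      setIntegral_congr_fun measurableSet_Ioc inner2] at swap
    have expand : (∫ y in Set.Ioc s t, (U t - U y) * h y)
        = U t * V t - ∫ y in Set.Ioc s t, U y * h y := by
      have e2 : (fun y => (U t - U y) * h y) = fun y => U t * h y - U y * h y := by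
        funext y; ring
      rw [e2, integral_sub (hh.const_mul (U t)) hUh, integral_const_mul]
    rw [swap, expand]; ring
  -- now expand the target integral
  have hfv : IntegrableOn (fun x => f x * v x) (Set.Ioc s t) := by
    simpa [mul_comm] using myBddMul hf vcont
  have huh : IntegrableOn (fun x => u x * h x) (Set.Ioc s t) := myBddMul hh ucont
  have split : (∫ x in Set.Ioc s t, (f x * v x + u x * h x))
      = (∫ x in Set.Ioc s t, f x * v x) + ∫ x in Set.Ioc s t, u x * h x :=
    integral_add hfv huh
  have ev : (∫ x in Set.Ioc s t, f x * v x)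
      = v s * U t + ∫ x in Set.Ioc s t, f x * V x := by
    have e : ∀ x ∈ Set.Ioc s t, f x * v x = v s * f x + f x * V x := by
      intro x hx
      rw [hv x ⟨hx.1.le, hx.2⟩]; ring
    rw [setIntegral_congr_fun measurableSet_Ioc e,
      integral_add (hf.const_mul (v s)) hfV, integral_const_mul]
  have eu : (∫ x in Set.Ioc s t, u x * h x)
      = u s * V t + ∫ x in Set.Ioc s t, U x * h x := by
    have e : ∀ x ∈ Set.Ioc s t, u x * h x = u s * h x + U x * h x := by
      intro x hx
      rw [hu x ⟨hx.1.le, hx.2⟩]; ring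
    rw [setIntegral_congr_fun measurableSet_Ioc e,
      integral_add (hh.const_mul (u s)) hUh, integral_const_mul]
  have hut : u t = u s + U t := hu t ⟨hst, le_refl t⟩
  have hvt : v t = v s + V t := hv t ⟨hst, le_refl t⟩
  rw [split, ev, eu, hut, hvt]
  have : (∫ x in Set.Ioc s t, f x * V x) + ∫ x in Set.Ioc s t, U x * h x = U t * V t := core
  nlinarith [this]

/-- Lemma 3.4(1): if `γ₁' ≥ 0` a.e. on `[s,t]`, then
`γ₅(t) - γ₅(s) ≤ (1/2)γ₁(t)γ₂(t)² - (1/2)γ₁(s)γ₂(s)²`. -/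
theorem stmt1 (a b : ℝ) (γ g : ℝ → Fin 5 → ℝ) (hγ : IsHorizontalOn a b γ g)
    (s t : ℝ) (hs : s ∈ Set.Icc a b) (ht : t ∈ Set.Icc a b) (hst : s < t)
    (hpos : ∀ᵐ τ ∂volume, τ ∈ Set.Icc s t → 0 ≤ g τ 0) :
    γ t 4 - γ s 4 ≤
      (1 / 2) * γ t 0 * (γ t 1) ^ 2 - (1 / 2) * γ s 0 * (γ s 1) ^ 2 := by
  obtain ⟨⟨hint, hrep⟩, hae⟩ := hγ
  have hab : a ≤ b := hs.1.trans hs.2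
  -- representation with base point s
  have rep : ∀ i : Fin 5, ∀ x ∈ Set.Icc s t, γ x i = γ s i + ∫ y in Set.Ioc s x, g y i := by
    intro i x hx
    have hx_ab : x ∈ Set.Icc a b := ⟨hs.1.trans hx.1, hx.2.trans ht.2⟩
    have h1 : IntervalIntegrable (fun z => g z i) volume a s :=
      (hint i).mono_set (by
        rw [Set.uIcc_of_le hab, Set.uIcc_of_le hs.1]
        exact Set.Icc_subset_Icc le_rfl hs.2)
    have h2 : IntervalIntegrable (fun z => g z i) volume s x :=
      (hint i).mono_set (by
        rw [Set.uIcc_of_le hab, Set.uIcc_of_le hx.1]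
        exact Set.Icc_subset_Icc hs.1 hx_ab.2)
    have hadd : (∫ y in a..s, g y i) + ∫ y in s..x, g y i = ∫ y in a..x, g y i :=
      intervalIntegral.integral_add_adjacent_intervals h1 h2
    rw [hrep x hx_ab i, hrep s hs i, ← intervalIntegral.integral_of_le hx.1]
    linarith
  -- integrability on Ioc s t
  have hioc : ∀ i : Fin 5, IntegrableOn (fun z => g z i) (Set.Ioc s t) := by
    intro i
    have := (intervalIntegrable_iff_integrableOn_Ioc_of_le hab).1 (hint i)
    exact this.mono_set (Set.Ioc_subset_Ioc hs.1 ht.2)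
  have hf : IntegrableOn (fun z => g z 0) (Set.Ioc s t) := hioc 0
  have hh1 : IntegrableOn (fun z => g z 1) (Set.Ioc s t) := hioc 1
  -- continuity of components on Icc s t
  have ccont : ∀ i : Fin 5, ContinuousOn (fun x => γ x i) (Set.Icc s t) := by
    intro i
    have : IntegrableOn (fun z => g z i) (Set.Icc s t) :=
      (integrableOn_Icc_iff_integrableOn_Ioc (by finiteness)).2 (hioc i)
    exact (continuousOn_const.add (intervalIntegral.continuousOn_primitive this)).congr (rep i)
  have ucont := ccont 0
  have vcont := ccont 1
  -- the derivative of v^2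
  set hh2 : ℝ → ℝ := fun y => g y 1 * γ y 1 + γ y 1 * g y 1 with hhh2
  have hh2int : IntegrableOn hh2 (Set.Ioc s t) := by
    have A : IntegrableOn (fun y => γ y 1 * g y 1) (Set.Ioc s t) := myBddMul hh1 vcont
    have B : IntegrableOn (fun y => g y 1 * γ y 1) (Set.Ioc s t) := by
      simpa [mul_comm] using A
    exact B.add A
  have hw : ∀ x ∈ Set.Icc s t,
      (fun z => γ z 1 * γ z 1) x = (fun z => γ z 1 * γ z 1) s + ∫ y in Set.Ioc s x, hh2 y := by
    intro x hx
    have := myParts (s := s) (t := x) hx.1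
      (hh1.mono_set (Set.Ioc_subset_Ioc_right hx.2))
      (hh1.mono_set (Set.Ioc_subset_Ioc_right hx.2))
      (fun z hz => rep 1 z ⟨hz.1, hz.2.trans hx.2⟩)
      (fun z hz => rep 1 z ⟨hz.1, hz.2.trans hx.2⟩)
    simp only at this ⊢
    linarith
  -- main integration by parts
  have P2 := myParts (s := s) (t := t) hst.le hf hh2int (rep 0) hw
  -- identify γ₅ increment
  have e5 : γ t 4 - γ s 4 = ∫ x in Set.Ioc s t, g x 4 := by
    have := rep 4 t ⟨hst.le, le_refl t⟩
    linarith
  -- a.e. identification of g4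
  have e4 : (∫ x in Set.Ioc s t, g x 4)
      = ∫ x in Set.Ioc s t, (1 / 2) * (γ x 0 * hh2 x) := by
    refine setIntegral_congr_ae measurableSet_Ioc ?_
    filter_upwards [hae] with x hx hmem
    have hx_ab : x ∈ Set.Icc a b := ⟨hs.1.trans hmem.1.le, hmem.2.trans ht.2⟩
    rw [(hx hx_ab).2.2, hhh2]
    ring
  -- integrabilities for splitting
  have hI1 : IntegrableOn (fun x => g x 0 * (γ x 1 * γ x 1)) (Set.Ioc s t) := by
    have := myBddMul hf (vcont.mul vcont)
    simpa [mul_comm] using this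
  have hI2 : IntegrableOn (fun x => γ x 0 * hh2 x) (Set.Ioc s t) := myBddMul hh2int ucont
  have splitP : (∫ x in Set.Ioc s t, (g x 0 * (γ x 1 * γ x 1) + γ x 0 * hh2 x))
      = (∫ x in Set.Ioc s t, g x 0 * (γ x 1 * γ x 1))
        + ∫ x in Set.Ioc s t, γ x 0 * hh2 x := integral_add hI1 hI2
  have ehalf : (∫ x in Set.Ioc s t, (1 / 2) * (γ x 0 * hh2 x))
      = (1 / 2) * ∫ x in Set.Ioc s t, γ x 0 * hh2 x := integral_const_mul _ _
  have nonneg : 0 ≤ ∫ x in Set.Ioc s t, g x 0 * (γ x 1 * γ x 1) := by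
    refine setIntegral_nonneg_ae measurableSet_Ioc ?_
    filter_upwards [hpos] with x hx hmem
    exact mul_nonneg (hx (Set.Ioc_subset_Icc_self hmem)) (mul_self_nonneg _)
  have sq1 : (γ t 1) ^ 2 = γ t 1 * γ t 1 := sq (γ t 1)
  have sq2 : (γ s 1) ^ 2 = γ s 1 * γ s 1 := sq (γ s 1)
  rw [sq1, sq2, e5, e4, ehalf]
  nlinarith [P2, splitP, nonneg]
end

section
/- Let γ = (γ₁,…,γ₅) : [a,b] → ℝ⁵ be a horizontal curve and let s, t ∈ [a,b] with s < t. If γ₁′ ≤ 0 almost everywhere on [s,t], then γ₅(t) − γ₅(s) ≥ (1/2)γ₁(t)(γ₂(t))² − (1/2)γ₁(s)(γ₂(s))². -/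
open MeasureTheory

/-- Fubini for the triangle: product of integrals equals the "integration by parts" sum. -/
lemma fubini_core {s t : ℝ} (f h : ℝ → ℝ)
    (hf : IntegrableOn f (Set.Ioc s t)) (hh : IntegrableOn h (Set.Ioc s t)) :
    (∫ x in Set.Ioc s t, f x) * (∫ y in Set.Ioc s t, h y) =
      (∫ x in Set.Ioc s t, f x * ∫ y in Set.Ioc s x, h y)
        + ∫ y in Set.Ioc s t, (∫ x in Set.Ioc s y, f x) * h y := by
  set μ := volume.restrict (Set.Ioc s t) with hμdef
  have hf' : Integrable f μ := hf
  have hh' : Integrable h μ := hh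
  have hKint : Integrable (fun p : ℝ × ℝ => f p.1 * h p.2) (μ.prod μ) := hf'.mul_prod hh'
  have hA : MeasurableSet {p : ℝ × ℝ | p.2 ≤ p.1} :=
    measurableSet_le measurable_snd measurable_fst
  have hsplit : ∫ p : ℝ × ℝ, f p.1 * h p.2 ∂(μ.prod μ) =
      (∫ p in {p : ℝ × ℝ | p.2 ≤ p.1}, f p.1 * h p.2 ∂(μ.prod μ))
        + ∫ p in {p : ℝ × ℝ | p.2 ≤ p.1}ᶜ, f p.1 * h p.2 ∂(μ.prod μ) :=
    (integral_add_compl hA hKint).symm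
  have hLHS : ∫ p : ℝ × ℝ, f p.1 * h p.2 ∂(μ.prod μ) = (∫ x, f x ∂μ) * ∫ y, h y ∂μ :=
    integral_prod_mul f h
  have h1 : (∫ p in {p : ℝ × ℝ | p.2 ≤ p.1}, f p.1 * h p.2 ∂(μ.prod μ))
      = ∫ x in Set.Ioc s t, f x * ∫ y in Set.Ioc s x, h y := by
    rw [← integral_indicator hA, integral_prod _ (hKint.indicator hA)]
    have hinner : ∀ x : ℝ,
        (∫ y, Set.indicator {p : ℝ × ℝ | p.2 ≤ p.1} (fun p => f p.1 * h p.2) (x, y) ∂μ)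
          = f x * ∫ y in Set.Iic x ∩ Set.Ioc s t, h y := by
      intro x
      have heq : (fun y => Set.indicator {p : ℝ × ℝ | p.2 ≤ p.1}
            (fun p => f p.1 * h p.2) (x, y))
          = Set.indicator (Set.Iic x) (fun y => f x * h y) := by
        ext y
        by_cases hy : y ≤ x <;> simp [Set.indicator_apply, hy]
      rw [heq, integral_indicator measurableSet_Iic,
        Measure.restrict_restrict measurableSet_Iic, integral_const_mul]
    simp_rw [hinner]
    apply setIntegral_congr_fun measurableSet_Ioc
    intro x hx
    have hset : Set.Iic x ∩ Set.Ioc s t = Set.Ioc s x := by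
      ext y
      simp only [Set.mem_inter_iff, Set.mem_Iic, Set.mem_Ioc]
      exact ⟨fun ⟨h1, h2, _⟩ => ⟨h2, h1⟩, fun ⟨h1, h2⟩ => ⟨h2, h1, h2.trans hx.2⟩⟩
    show f x * (∫ y in Set.Iic x ∩ Set.Ioc s t, h y) = f x * ∫ y in Set.Ioc s x, h y
    rw [hset]
  have h2 : (∫ p in {p : ℝ × ℝ | p.2 ≤ p.1}ᶜ, f p.1 * h p.2 ∂(μ.prod μ))
      = ∫ y in Set.Ioc s t, (∫ x in Set.Ioc s y, f x) * h y := by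
    rw [← integral_indicator hA.compl, integral_prod_symm _ (hKint.indicator hA.compl)]
    have hinner : ∀ y : ℝ,
        (∫ x, Set.indicator {p : ℝ × ℝ | p.2 ≤ p.1}ᶜ (fun p => f p.1 * h p.2) (x, y) ∂μ)
          = (∫ x in Set.Iio y ∩ Set.Ioc s t, f x) * h y := by
      intro y
      have heq : (fun x => Set.indicator {p : ℝ × ℝ | p.2 ≤ p.1}ᶜ
            (fun p => f p.1 * h p.2) (x, y))
          = Set.indicator (Set.Iio y) (fun x => f x * h y) := by
        ext x
        by_cases hxy : x < y <;>
          simp [Set.indicator_apply, hxy, not_lt.1, not_le.2, le_of_not_gt, not_le_of_gt]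
      rw [heq, integral_indicator measurableSet_Iio,
        Measure.restrict_restrict measurableSet_Iio, integral_mul_const]
    simp_rw [hinner]
    apply setIntegral_congr_fun measurableSet_Ioc
    intro y hy
    have hset : Set.Iio y ∩ Set.Ioc s t = Set.Ioo s y := by
      ext x
      simp only [Set.mem_inter_iff, Set.mem_Iio, Set.mem_Ioc, Set.mem_Ioo]
      exact ⟨fun ⟨h1, h2, _⟩ => ⟨h2, h1⟩, fun ⟨h1, h2⟩ => ⟨h2, h1, (h2.trans_le hy.2).le⟩⟩
    show (∫ x in Set.Iio y ∩ Set.Ioc s t, f x) * h y = (∫ x in Set.Ioc s y, f x) * h y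
    rw [hset, ← integral_Ioc_eq_integral_Ioo]
  calc (∫ x in Set.Ioc s t, f x) * (∫ y in Set.Ioc s t, h y)
      = ∫ p : ℝ × ℝ, f p.1 * h p.2 ∂(μ.prod μ) := hLHS.symm
    _ = _ := by rw [hsplit, h1, h2]

/-- Product rule for two indefinite integrals. -/
lemma prod_rule {s t : ℝ} (hst : s ≤ t) (u v f h : ℝ → ℝ)
    (hf : IntervalIntegrable f volume s t) (hh : IntervalIntegrable h volume s t)
    (hu : ∀ x ∈ Set.Icc s t, u x = u s + ∫ τ in s..x, f τ)
    (hv : ∀ x ∈ Set.Icc s t, v x = v s + ∫ τ in s..x, h τ) :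
    u t * v t - u s * v s = ∫ τ in s..t, (f τ * v τ + u τ * h τ) := by
  have huIcc : Set.uIcc s t = Set.Icc s t := Set.uIcc_of_le hst
  have hUcont : ContinuousOn (fun x => ∫ τ in s..x, f τ) (Set.uIcc s t) :=
    intervalIntegral.continuousOn_primitive_interval' hf Set.left_mem_uIcc
  have hVcont : ContinuousOn (fun x => ∫ τ in s..x, h τ) (Set.uIcc s t) :=
    intervalIntegral.continuousOn_primitive_interval' hh Set.left_mem_uIcc
  have step1 : (∫ τ in s..t, (f τ * v τ + u τ * h τ))
      = ∫ τ in s..t, ((f τ * v s + f τ * ∫ σ in s..τ, h σ)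
          + (u s * h τ + (∫ σ in s..τ, f σ) * h τ)) := by
    apply intervalIntegral.integral_congr
    intro τ hτ
    rw [huIcc] at hτ
    simp only
    rw [hu τ hτ, hv τ hτ]; ring
  have i1 : IntervalIntegrable (fun τ => f τ * v s) volume s t := hf.mul_const _
  have i2 : IntervalIntegrable (fun τ => f τ * ∫ σ in s..τ, h σ) volume s t :=
    hf.mul_continuousOn hVcont
  have i3 : IntervalIntegrable (fun τ => u s * h τ) volume s t := hh.const_mul _
  have i4 : IntervalIntegrable (fun τ => (∫ σ in s..τ, f σ) * h τ) volume s t :=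
    hh.continuousOn_mul hUcont
  rw [step1, intervalIntegral.integral_add (i1.add i2) (i3.add i4),
    intervalIntegral.integral_add i1 i2, intervalIntegral.integral_add i3 i4,
    intervalIntegral.integral_mul_const, intervalIntegral.integral_const_mul]
  have key : (∫ τ in s..t, f τ * ∫ σ in s..τ, h σ)
      + (∫ τ in s..t, (∫ σ in s..τ, f σ) * h τ)
      = (∫ τ in s..t, f τ) * ∫ τ in s..t, h τ := by
    have hfI : IntegrableOn f (Set.Ioc s t) :=
      (intervalIntegrable_iff_integrableOn_Ioc_of_le hst).1 hf
    have hhI : IntegrableOn h (Set.Ioc s t) :=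
      (intervalIntegrable_iff_integrableOn_Ioc_of_le hst).1 hh
    rw [intervalIntegral.integral_of_le hst, intervalIntegral.integral_of_le hst,
      intervalIntegral.integral_of_le hst, intervalIntegral.integral_of_le hst]
    rw [setIntegral_congr_fun measurableSet_Ioc
        (fun τ hτ => by simp only; rw [intervalIntegral.integral_of_le hτ.1.le] :
        Set.EqOn (fun τ => f τ * ∫ σ in s..τ, h σ)
          (fun τ => f τ * ∫ σ in Set.Ioc s τ, h σ) (Set.Ioc s t)),
      setIntegral_congr_fun measurableSet_Ioc
        (fun τ hτ => by simp only; rw [intervalIntegral.integral_of_le hτ.1.le] :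
        Set.EqOn (fun τ => (∫ σ in s..τ, f σ) * h τ)
          (fun τ => (∫ σ in Set.Ioc s τ, f σ) * h τ) (Set.Ioc s t))]
    exact (fubini_core f h hfI hhI).symm
  have hA : (∫ τ in s..t, f τ) = u t - u s := by
    have := hu t (Set.right_mem_Icc.mpr hst); linarith
  have hB : (∫ τ in s..t, h τ) = v t - v s := by
    have := hv t (Set.right_mem_Icc.mpr hst); linarith
  rw [hA, hB] at key
  rw [hA, hB]
  linear_combination -key

/-- Representation of increments of an AC curve. -/
lemma rep_sub {a b : ℝ} {γ g : ℝ → Fin 5 → ℝ} (h : IsACOn a b γ g) (i : Fin 5)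
    {s x : ℝ} (hs : s ∈ Set.Icc a b) (hx : x ∈ Set.Icc a b) :
    γ x i = γ s i + ∫ τ in s..x, g τ i := by
  have hab : a ≤ b := hs.1.trans hs.2
  have hmem : ∀ {c : ℝ}, c ∈ Set.Icc a b → Set.uIcc a c ⊆ Set.uIcc a b := by
    intro c hc
    apply Set.uIcc_subset_uIcc Set.left_mem_uIcc
    rw [Set.uIcc_of_le hab]; exact hc
  have h1 : IntervalIntegrable (fun τ => g τ i) volume a s := (h.1 i).mono_set (hmem hs)
  have h2 : IntervalIntegrable (fun τ => g τ i) volume a x := (h.1 i).mono_set (hmem hx)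
  have hsub := intervalIntegral.integral_interval_sub_left h2 h1
  rw [h.2 x hx i, h.2 s hs i]
  linarith

/-- Lemma 3.4(2): if `γ₁' ≤ 0` a.e. on `[s,t]`, then
`γ₅(t) - γ₅(s) ≥ (1/2)γ₁(t)γ₂(t)² - (1/2)γ₁(s)γ₂(s)²`. -/
theorem stmt2 (a b : ℝ) (γ g : ℝ → Fin 5 → ℝ) (hγ : IsHorizontalOn a b γ g)
    (s t : ℝ) (hs : s ∈ Set.Icc a b) (ht : t ∈ Set.Icc a b) (hst : s < t)
    (hneg : ∀ᵐ τ ∂volume, τ ∈ Set.Icc s t → g τ 0 ≤ 0) :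
    (1 / 2) * γ t 0 * (γ t 1) ^ 2 - (1 / 2) * γ s 0 * (γ s 1) ^ 2 ≤
      γ t 4 - γ s 4 := by
  obtain ⟨hAC, hhor⟩ := hγ
  have huIcc : Set.uIcc s t = Set.Icc s t := Set.uIcc_of_le hst.le
  have hIccsub : Set.Icc s t ⊆ Set.Icc a b := Set.Icc_subset_Icc hs.1 ht.2
  have hab : a ≤ b := hs.1.trans hs.2
  have hi : ∀ i : Fin 5, IntervalIntegrable (fun τ => g τ i) volume s t := by
    intro i
    apply (hAC.1 i).mono_set
    rw [Set.uIcc_of_le hab, huIcc]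
    exact hIccsub
  have hcont : ∀ i : Fin 5, ContinuousOn (fun x => γ x i) (Set.uIcc s t) := by
    intro i
    have hc : ContinuousOn (fun x => γ s i + ∫ τ in s..x, g τ i) (Set.uIcc s t) :=
      continuousOn_const.add
        (intervalIntegral.continuousOn_primitive_interval' (hi i) Set.left_mem_uIcc)
    apply hc.congr
    intro x hx
    rw [huIcc] at hx
    exact rep_sub hAC i hs (hIccsub hx)
  have hv2 : ∀ x ∈ Set.Icc s t, γ x 1 * γ x 1 = γ s 1 * γ s 1
      + ∫ τ in s..x, (g τ 1 * γ τ 1 + γ τ 1 * g τ 1) := by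
    intro x hx
    have hsub' : Set.uIcc s x ⊆ Set.uIcc s t :=
      Set.uIcc_subset_uIcc Set.left_mem_uIcc (by rw [huIcc]; exact hx)
    have hrule := prod_rule hx.1 (fun y => γ y 1) (fun y => γ y 1)
      (fun τ => g τ 1) (fun τ => g τ 1)
      ((hi 1).mono_set hsub') ((hi 1).mono_set hsub')
      (fun y hy => rep_sub hAC 1 hs (hIccsub ⟨hy.1, hy.2.trans hx.2⟩))
      (fun y hy => rep_sub hAC 1 hs (hIccsub ⟨hy.1, hy.2.trans hx.2⟩))
    linarith
  have hh2 : IntervalIntegrable (fun τ => g τ 1 * γ τ 1 + γ τ 1 * g τ 1) volume s t :=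
    ((hi 1).mul_continuousOn (hcont 1)).add ((hi 1).continuousOn_mul (hcont 1))
  have hmain := prod_rule hst.le (fun y => γ y 0) (fun y => γ y 1 * γ y 1)
    (fun τ => g τ 0) (fun τ => g τ 1 * γ τ 1 + γ τ 1 * g τ 1)
    (hi 0) hh2 (fun y hy => rep_sub hAC 0 hs (hIccsub hy)) hv2
  have hC : γ t 4 - γ s 4 = ∫ τ in s..t, g τ 1 * γ τ 0 * γ τ 1 := by
    have h4 : γ t 4 = γ s 4 + ∫ τ in s..t, g τ 4 := rep_sub hAC 4 hs ht
    have hcg : (∫ τ in s..t, g τ 4) = ∫ τ in s..t, g τ 1 * γ τ 0 * γ τ 1 := by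
      apply intervalIntegral.integral_congr_ae
      filter_upwards [hhor] with τ hτ hmem
      rw [Set.uIoc_of_le hst.le] at hmem
      exact (hτ ⟨hs.1.trans hmem.1.le, hmem.2.trans ht.2⟩).2.2
    linarith
  have hint2 : IntervalIntegrable (fun τ => g τ 0 * (γ τ 1 * γ τ 1)
      + γ τ 0 * (g τ 1 * γ τ 1 + γ τ 1 * g τ 1)) volume s t :=
    ((hi 0).mul_continuousOn ((hcont 1).mul (hcont 1))).add (hh2.continuousOn_mul (hcont 0))
  have hnnint : IntervalIntegrable (fun τ => -(1/2) * g τ 0 * (γ τ 1 * γ τ 1)) volume s t :=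
    ((hi 0).const_mul _).mul_continuousOn ((hcont 1).mul (hcont 1))
  have hsplit : (∫ τ in s..t, g τ 1 * γ τ 0 * γ τ 1)
      = ∫ τ in s..t, ((1/2) * (g τ 0 * (γ τ 1 * γ τ 1)
          + γ τ 0 * (g τ 1 * γ τ 1 + γ τ 1 * g τ 1))
        + -(1/2) * g τ 0 * (γ τ 1 * γ τ 1)) := by
    apply intervalIntegral.integral_congr
    intro τ _
    simp only
    ring
  have hnn : 0 ≤ ∫ τ in s..t, -(1/2) * g τ 0 * (γ τ 1 * γ τ 1) := by
    apply intervalIntegral.integral_nonneg_of_ae_restrict hst.le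
    have hae : ∀ᵐ τ ∂(volume.restrict (Set.Icc s t)),
        0 ≤ -(1/2) * g τ 0 * (γ τ 1 * γ τ 1) := by
      rw [ae_restrict_iff' measurableSet_Icc]
      filter_upwards [hneg] with τ hτ hmem
      have h0 : g τ 0 ≤ 0 := hτ hmem
      nlinarith [mul_self_nonneg (γ τ 1)]
    exact hae
  rw [hsplit, intervalIntegral.integral_add (hint2.const_mul (1/2)) hnnint,
    intervalIntegral.integral_const_mul, ← hmain] at hC
  have e1 : (γ t 1) ^ 2 = γ t 1 * γ t 1 := sq (γ t 1)
  have e2 : (γ s 1) ^ 2 = γ s 1 * γ s 1 := sq (γ s 1)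
  rw [e1, e2]
  linarith
end

section
/- For any λ ∈ ℝ and any point p ∈ ℝ⁵ of the form (0,0,0,λ³,0) or (0,0,0,0,λ³), there exists a horizontal curve γ : [0,1] → ℝ⁵ with γ(0) = 0, γ(1) = p, and length ℓ(γ) ≤ 8|λ|. Consequently, the Carnot–Carathéodory distance from the origin to p, defined as the infimum of the lengths of horizontal curves joining 0 and p, is at most 8|λ|. -/
open MeasureTheory

/-- The length of a horizontal curve on `[0,1]` with a.e. derivative `g`. -/
noncomputable def hLength (g : ℝ → Fin 5 → ℝ) : ℝ :=
  ∫ t in (0 : ℝ)..1, Real.sqrt ((g t 0) ^ 2 + (g t 1) ^ 2)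

namespace Stmt8Aux
noncomputable section

/-! ### Ramp functions and piecewise data -/

def rmp (a b t : ℝ) : ℝ := min (max (t - a) 0) (b - a)

lemma rmp_left {a b t : ℝ} (hab : a ≤ b) (h : t ≤ a) : rmp a b t = 0 := by
  unfold rmp; rw [max_eq_right (by linarith), min_eq_left (by linarith)]

lemma rmp_mid {a b t : ℝ} (h1 : a ≤ t) (h2 : t ≤ b) : rmp a b t = t - a := by
  unfold rmp; rw [max_eq_left (by linarith), min_eq_left (by linarith)]

lemma rmp_right {a b t : ℝ} (hab : a ≤ b) (h : b ≤ t) : rmp a b t = b - a := by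
  unfold rmp; rw [max_eq_left (by linarith), min_eq_right (by linarith)]

variable (c d : Fin 4 → ℝ)

def X (t : ℝ) : ℝ :=
  c 0 * rmp 0 (1/8) t + c 1 * rmp (2/8) (3/8) t + c 2 * rmp (4/8) (5/8) t + c 3 * rmp (6/8) (7/8) t

def Y (t : ℝ) : ℝ :=
  d 0 * rmp (1/8) (2/8) t + d 1 * rmp (3/8) (4/8) t + d 2 * rmp (5/8) (6/8) t + d 3 * rmp (7/8) 1 t

def U (t : ℝ) : ℝ :=
  if t < 1/8 then c 0 else if t < 2/8 then 0 else if t < 3/8 then c 1 else if t < 4/8 then 0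
  else if t < 5/8 then c 2 else if t < 6/8 then 0 else if t < 7/8 then c 3 else 0

def V (t : ℝ) : ℝ :=
  if t < 1/8 then 0 else if t < 2/8 then d 0 else if t < 3/8 then 0 else if t < 4/8 then d 1
  else if t < 5/8 then 0 else if t < 6/8 then d 2 else if t < 7/8 then 0 else d 3

lemma X_cont : Continuous (X c) := by unfold X rmp; fun_prop
lemma Y_cont : Continuous (Y d) := by unfold Y rmp; fun_prop

/-! ### Values of `X`, `Y` on the eight segments -/

lemma Xval0 {t : ℝ} (h1 : 0 ≤ t) (h2 : t ≤ 1/8) : X c t = c 0 * t := by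
  rw [X, rmp_mid (by linarith) (by linarith), rmp_left (by norm_num) (by linarith),
    rmp_left (by norm_num) (by linarith), rmp_left (by norm_num) (by linarith)]; ring

lemma Xval1 {t : ℝ} (h1 : 1/8 ≤ t) (h2 : t ≤ 2/8) : X c t = c 0 / 8 := by
  rw [X, rmp_right (by norm_num) (by linarith), rmp_left (by norm_num) (by linarith),
    rmp_left (by norm_num) (by linarith), rmp_left (by norm_num) (by linarith)]; ring

lemma Xval2 {t : ℝ} (h1 : 2/8 ≤ t) (h2 : t ≤ 3/8) : X c t = c 0 / 8 + c 1 * (t - 2/8) := by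
  rw [X, rmp_right (by norm_num) (by linarith), rmp_mid (by linarith) (by linarith),
    rmp_left (by norm_num) (by linarith), rmp_left (by norm_num) (by linarith)]; ring

lemma Xval3 {t : ℝ} (h1 : 3/8 ≤ t) (h2 : t ≤ 4/8) : X c t = (c 0 + c 1) / 8 := by
  rw [X, rmp_right (by norm_num) (by linarith), rmp_right (by norm_num) (by linarith),
    rmp_left (by norm_num) (by linarith), rmp_left (by norm_num) (by linarith)]; ring

lemma Xval4 {t : ℝ} (h1 : 4/8 ≤ t) (h2 : t ≤ 5/8) :
    X c t = (c 0 + c 1) / 8 + c 2 * (t - 4/8) := by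
  rw [X, rmp_right (by norm_num) (by linarith), rmp_right (by norm_num) (by linarith),
    rmp_mid (by linarith) (by linarith), rmp_left (by norm_num) (by linarith)]; ring

lemma Xval5 {t : ℝ} (h1 : 5/8 ≤ t) (h2 : t ≤ 6/8) : X c t = (c 0 + c 1 + c 2) / 8 := by
  rw [X, rmp_right (by norm_num) (by linarith), rmp_right (by norm_num) (by linarith),
    rmp_right (by norm_num) (by linarith), rmp_left (by norm_num) (by linarith)]; ring

lemma Xval6 {t : ℝ} (h1 : 6/8 ≤ t) (h2 : t ≤ 7/8) :
    X c t = (c 0 + c 1 + c 2) / 8 + c 3 * (t - 6/8) := by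
  rw [X, rmp_right (by norm_num) (by linarith), rmp_right (by norm_num) (by linarith),
    rmp_right (by norm_num) (by linarith), rmp_mid (by linarith) (by linarith)]; ring

lemma Xval7 {t : ℝ} (h1 : 7/8 ≤ t) : X c t = (c 0 + c 1 + c 2 + c 3) / 8 := by
  rw [X, rmp_right (by norm_num) (by linarith), rmp_right (by norm_num) (by linarith),
    rmp_right (by norm_num) (by linarith), rmp_right (by norm_num) (by linarith)]; ring

lemma Yval0 {t : ℝ} (h2 : t ≤ 1/8) : Y d t = 0 := by
  rw [Y, rmp_left (by norm_num) (by linarith), rmp_left (by norm_num) (by linarith),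
    rmp_left (by norm_num) (by linarith), rmp_left (by norm_num) (by linarith)]; ring

lemma Yval1 {t : ℝ} (h1 : 1/8 ≤ t) (h2 : t ≤ 2/8) : Y d t = d 0 * (t - 1/8) := by
  rw [Y, rmp_mid (by linarith) (by linarith), rmp_left (by norm_num) (by linarith),
    rmp_left (by norm_num) (by linarith), rmp_left (by norm_num) (by linarith)]; ring

lemma Yval2 {t : ℝ} (h1 : 2/8 ≤ t) (h2 : t ≤ 3/8) : Y d t = d 0 / 8 := by
  rw [Y, rmp_right (by norm_num) (by linarith), rmp_left (by norm_num) (by linarith),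
    rmp_left (by norm_num) (by linarith), rmp_left (by norm_num) (by linarith)]; ring

lemma Yval3 {t : ℝ} (h1 : 3/8 ≤ t) (h2 : t ≤ 4/8) : Y d t = d 0 / 8 + d 1 * (t - 3/8) := by
  rw [Y, rmp_right (by norm_num) (by linarith), rmp_mid (by linarith) (by linarith),
    rmp_left (by norm_num) (by linarith), rmp_left (by norm_num) (by linarith)]; ring

lemma Yval4 {t : ℝ} (h1 : 4/8 ≤ t) (h2 : t ≤ 5/8) : Y d t = (d 0 + d 1) / 8 := by
  rw [Y, rmp_right (by norm_num) (by linarith), rmp_right (by norm_num) (by linarith),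
    rmp_left (by norm_num) (by linarith), rmp_left (by norm_num) (by linarith)]; ring

lemma Yval5 {t : ℝ} (h1 : 5/8 ≤ t) (h2 : t ≤ 6/8) :
    Y d t = (d 0 + d 1) / 8 + d 2 * (t - 5/8) := by
  rw [Y, rmp_right (by norm_num) (by linarith), rmp_right (by norm_num) (by linarith),
    rmp_mid (by linarith) (by linarith), rmp_left (by norm_num) (by linarith)]; ring

lemma Yval6 {t : ℝ} (h1 : 6/8 ≤ t) (h2 : t ≤ 7/8) : Y d t = (d 0 + d 1 + d 2) / 8 := by
  rw [Y, rmp_right (by norm_num) (by linarith), rmp_right (by norm_num) (by linarith),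
    rmp_right (by norm_num) (by linarith), rmp_left (by norm_num) (by linarith)]; ring

lemma Yval7 {t : ℝ} (h1 : 7/8 ≤ t) (h2 : t ≤ 1) :
    Y d t = (d 0 + d 1 + d 2) / 8 + d 3 * (t - 7/8) := by
  rw [Y, rmp_right (by norm_num) (by linarith), rmp_right (by norm_num) (by linarith),
    rmp_right (by norm_num) (by linarith), rmp_mid (by linarith) (by linarith)]; ring

/-! ### Values of `U`, `V` on the eight (right-closed at left) segments -/

lemma Uval0 {x : ℝ} (h2 : x < 1/8) : U c x = c 0 := by
  simp only [U]; rw [if_pos h2]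

lemma Uval1 {x : ℝ} (h1 : 1/8 ≤ x) (h2 : x < 2/8) : U c x = 0 := by
  simp only [U]; rw [if_neg (by simp only [not_lt]; linarith), if_pos h2]

lemma Uval2 {x : ℝ} (h1 : 2/8 ≤ x) (h2 : x < 3/8) : U c x = c 1 := by
  simp only [U]
  rw [if_neg (by simp only [not_lt]; linarith), if_neg (by simp only [not_lt]; linarith),
    if_pos h2]

lemma Uval3 {x : ℝ} (h1 : 3/8 ≤ x) (h2 : x < 4/8) : U c x = 0 := by
  simp only [U]
  rw [if_neg (by simp only [not_lt]; linarith), if_neg (by simp only [not_lt]; linarith),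
    if_neg (by simp only [not_lt]; linarith), if_pos h2]

lemma Uval4 {x : ℝ} (h1 : 4/8 ≤ x) (h2 : x < 5/8) : U c x = c 2 := by
  simp only [U]
  rw [if_neg (by simp only [not_lt]; linarith), if_neg (by simp only [not_lt]; linarith),
    if_neg (by simp only [not_lt]; linarith), if_neg (by simp only [not_lt]; linarith),
    if_pos h2]

lemma Uval5 {x : ℝ} (h1 : 5/8 ≤ x) (h2 : x < 6/8) : U c x = 0 := by
  simp only [U]
  rw [if_neg (by simp only [not_lt]; linarith), if_neg (by simp only [not_lt]; linarith),
    if_neg (by simp only [not_lt]; linarith), if_neg (by simp only [not_lt]; linarith),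
    if_neg (by simp only [not_lt]; linarith), if_pos h2]

lemma Uval6 {x : ℝ} (h1 : 6/8 ≤ x) (h2 : x < 7/8) : U c x = c 3 := by
  simp only [U]
  rw [if_neg (by simp only [not_lt]; linarith), if_neg (by simp only [not_lt]; linarith),
    if_neg (by simp only [not_lt]; linarith), if_neg (by simp only [not_lt]; linarith),
    if_neg (by simp only [not_lt]; linarith), if_neg (by simp only [not_lt]; linarith),
    if_pos h2]

lemma Uval7 {x : ℝ} (h1 : 7/8 ≤ x) : U c x = 0 := by
  simp only [U]
  rw [if_neg (by simp only [not_lt]; linarith), if_neg (by simp only [not_lt]; linarith),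
    if_neg (by simp only [not_lt]; linarith), if_neg (by simp only [not_lt]; linarith),
    if_neg (by simp only [not_lt]; linarith), if_neg (by simp only [not_lt]; linarith),
    if_neg (by simp only [not_lt]; linarith)]

lemma Vval0 {x : ℝ} (h2 : x < 1/8) : V d x = 0 := by
  simp only [V]; rw [if_pos h2]

lemma Vval1 {x : ℝ} (h1 : 1/8 ≤ x) (h2 : x < 2/8) : V d x = d 0 := by
  simp only [V]; rw [if_neg (by simp only [not_lt]; linarith), if_pos h2]

lemma Vval2 {x : ℝ} (h1 : 2/8 ≤ x) (h2 : x < 3/8) : V d x = 0 := by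
  simp only [V]
  rw [if_neg (by simp only [not_lt]; linarith), if_neg (by simp only [not_lt]; linarith),
    if_pos h2]

lemma Vval3 {x : ℝ} (h1 : 3/8 ≤ x) (h2 : x < 4/8) : V d x = d 1 := by
  simp only [V]
  rw [if_neg (by simp only [not_lt]; linarith), if_neg (by simp only [not_lt]; linarith),
    if_neg (by simp only [not_lt]; linarith), if_pos h2]

lemma Vval4 {x : ℝ} (h1 : 4/8 ≤ x) (h2 : x < 5/8) : V d x = 0 := by
  simp only [V]
  rw [if_neg (by simp only [not_lt]; linarith), if_neg (by simp only [not_lt]; linarith),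
    if_neg (by simp only [not_lt]; linarith), if_neg (by simp only [not_lt]; linarith),
    if_pos h2]

lemma Vval5 {x : ℝ} (h1 : 5/8 ≤ x) (h2 : x < 6/8) : V d x = d 2 := by
  simp only [V]
  rw [if_neg (by simp only [not_lt]; linarith), if_neg (by simp only [not_lt]; linarith),
    if_neg (by simp only [not_lt]; linarith), if_neg (by simp only [not_lt]; linarith),
    if_neg (by simp only [not_lt]; linarith), if_pos h2]

lemma Vval6 {x : ℝ} (h1 : 6/8 ≤ x) (h2 : x < 7/8) : V d x = 0 := by
  simp only [V]
  rw [if_neg (by simp only [not_lt]; linarith), if_neg (by simp only [not_lt]; linarith),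
    if_neg (by simp only [not_lt]; linarith), if_neg (by simp only [not_lt]; linarith),
    if_neg (by simp only [not_lt]; linarith), if_neg (by simp only [not_lt]; linarith),
    if_pos h2]

lemma Vval7 {x : ℝ} (h1 : 7/8 ≤ x) : V d x = d 3 := by
  simp only [V]
  rw [if_neg (by simp only [not_lt]; linarith), if_neg (by simp only [not_lt]; linarith),
    if_neg (by simp only [not_lt]; linarith), if_neg (by simp only [not_lt]; linarith),
    if_neg (by simp only [not_lt]; linarith), if_neg (by simp only [not_lt]; linarith),
    if_neg (by simp only [not_lt]; linarith)]

/-! ### One-sided derivatives -/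

lemma hasDerivWithinAt_of_affine {f : ℝ → ℝ} {a b x k m : ℝ} (hx1 : a ≤ x) (hx2 : x < b)
    (h : ∀ y, a ≤ y → y ≤ b → f y = k + m * y) : HasDerivWithinAt f m (Set.Ioi x) x := by
  have haff : HasDerivWithinAt (fun y : ℝ => k + m * y) m (Set.Ioi x) x := by
    simpa using (((hasDerivAt_id x).const_mul m).const_add k).hasDerivWithinAt
  refine haff.congr_of_eventuallyEq ?_ (h x hx1 hx2.le)
  filter_upwards [Ioo_mem_nhdsGT_of_mem (Set.mem_Ico.mpr ⟨le_refl x, hx2⟩)] with y hy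
  exact h y (hx1.trans hy.1.le) hy.2.le

lemma U_deriv {x : ℝ} (h0 : 0 ≤ x) (hlt : x < 1) :
    HasDerivWithinAt (X c) (U c x) (Set.Ioi x) x := by
  rcases lt_or_ge x (1/8) with h | h
  · rw [Uval0 c h]
    exact hasDerivWithinAt_of_affine (k := 0) h0 h
      (fun y hy1 hy2 => by rw [Xval0 c hy1 hy2]; ring)
  rcases lt_or_ge x (2/8) with h' | h'
  · rw [Uval1 c h h']
    exact hasDerivWithinAt_of_affine (k := c 0 / 8) h h'
      (fun y hy1 hy2 => by rw [Xval1 c hy1 hy2]; ring)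
  rcases lt_or_ge x (3/8) with h'' | h''
  · rw [Uval2 c h' h'']
    exact hasDerivWithinAt_of_affine (k := c 0 / 8 - c 1 * (2/8)) h' h''
      (fun y hy1 hy2 => by rw [Xval2 c hy1 hy2]; ring)
  rcases lt_or_ge x (4/8) with h3 | h3
  · rw [Uval3 c h'' h3]
    exact hasDerivWithinAt_of_affine (k := (c 0 + c 1) / 8) h'' h3
      (fun y hy1 hy2 => by rw [Xval3 c hy1 hy2]; ring)
  rcases lt_or_ge x (5/8) with h4 | h4
  · rw [Uval4 c h3 h4]
    exact hasDerivWithinAt_of_affine (k := (c 0 + c 1) / 8 - c 2 * (4/8)) h3 h4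
      (fun y hy1 hy2 => by rw [Xval4 c hy1 hy2]; ring)
  rcases lt_or_ge x (6/8) with h5 | h5
  · rw [Uval5 c h4 h5]
    exact hasDerivWithinAt_of_affine (k := (c 0 + c 1 + c 2) / 8) h4 h5
      (fun y hy1 hy2 => by rw [Xval5 c hy1 hy2]; ring)
  rcases lt_or_ge x (7/8) with h6 | h6
  · rw [Uval6 c h5 h6]
    exact hasDerivWithinAt_of_affine (k := (c 0 + c 1 + c 2) / 8 - c 3 * (6/8)) h5 h6
      (fun y hy1 hy2 => by rw [Xval6 c hy1 hy2]; ring)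
  · rw [Uval7 c h6]
    exact hasDerivWithinAt_of_affine (k := (c 0 + c 1 + c 2 + c 3) / 8) h6 hlt
      (fun y hy1 _ => by rw [Xval7 c hy1]; ring)

lemma V_deriv {x : ℝ} (h0 : 0 ≤ x) (hlt : x < 1) :
    HasDerivWithinAt (Y d) (V d x) (Set.Ioi x) x := by
  rcases lt_or_ge x (1/8) with h | h
  · rw [Vval0 d h]
    exact hasDerivWithinAt_of_affine (k := 0) h0 h
      (fun y hy1 hy2 => by rw [Yval0 d hy2]; ring)
  rcases lt_or_ge x (2/8) with h' | h'
  · rw [Vval1 d h h']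
    exact hasDerivWithinAt_of_affine (k := -(d 0 * (1/8))) h h'
      (fun y hy1 hy2 => by rw [Yval1 d hy1 hy2]; ring)
  rcases lt_or_ge x (3/8) with h'' | h''
  · rw [Vval2 d h' h'']
    exact hasDerivWithinAt_of_affine (k := d 0 / 8) h' h''
      (fun y hy1 hy2 => by rw [Yval2 d hy1 hy2]; ring)
  rcases lt_or_ge x (4/8) with h3 | h3
  · rw [Vval3 d h'' h3]
    exact hasDerivWithinAt_of_affine (k := d 0 / 8 - d 1 * (3/8)) h'' h3
      (fun y hy1 hy2 => by rw [Yval3 d hy1 hy2]; ring)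
  rcases lt_or_ge x (5/8) with h4 | h4
  · rw [Vval4 d h3 h4]
    exact hasDerivWithinAt_of_affine (k := (d 0 + d 1) / 8) h3 h4
      (fun y hy1 hy2 => by rw [Yval4 d hy1 hy2]; ring)
  rcases lt_or_ge x (6/8) with h5 | h5
  · rw [Vval5 d h4 h5]
    exact hasDerivWithinAt_of_affine (k := (d 0 + d 1) / 8 - d 2 * (5/8)) h4 h5
      (fun y hy1 hy2 => by rw [Yval5 d hy1 hy2]; ring)
  rcases lt_or_ge x (7/8) with h6 | h6
  · rw [Vval6 d h5 h6]
    exact hasDerivWithinAt_of_affine (k := (d 0 + d 1 + d 2) / 8) h5 h6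
      (fun y hy1 hy2 => by rw [Yval6 d hy1 hy2]; ring)
  · rw [Vval7 d h6]
    exact hasDerivWithinAt_of_affine (k := (d 0 + d 1 + d 2) / 8 - d 3 * (7/8)) h6 hlt
      (fun y hy1 hy2 => by rw [Yval7 d hy1 hy2]; ring)

/-! ### Integrability and integrals on segments -/

lemma seg_int {f : ℝ → ℝ} {a b k m : ℝ} (hab : a ≤ b)
    (h : ∀ x ∈ Set.Ioo a b, f x = k + m * x) : IntervalIntegrable f volume a b := by
  rw [intervalIntegrable_iff_integrableOn_Ioo_of_le hab]
  have hq : IntegrableOn (fun x : ℝ => k + m * x) (Set.Ioo a b) volume :=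
    (Continuous.integrableOn_Icc (by fun_prop)).mono_set Set.Ioo_subset_Icc_self
  exact hq.congr_fun (fun x hx => (h x hx).symm) measurableSet_Ioo

lemma seg_val {f : ℝ → ℝ} {a b k m : ℝ} (hab : a ≤ b)
    (h : ∀ x ∈ Set.Ioo a b, f x = k + m * x) :
    ∫ x in a..b, f x = k * (b - a) + m * ((b ^ 2 - a ^ 2) / 2) := by
  rw [intervalIntegral.integral_of_le hab, integral_Ioc_eq_integral_Ioo,
    setIntegral_congr_fun measurableSet_Ioo h, ← integral_Ioc_eq_integral_Ioo,
    ← intervalIntegral.integral_of_le hab]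
  have h1 : IntervalIntegrable (fun _ : ℝ => k) volume a b := intervalIntegrable_const
  have h2 : IntervalIntegrable (fun x : ℝ => m * x) volume a b := by
    apply Continuous.intervalIntegrable; fun_prop
  rw [intervalIntegral.integral_add h1 h2, intervalIntegral.integral_const,
    intervalIntegral.integral_const_mul, integral_id, smul_eq_mul]
  ring

lemma seg_both {f : ℝ → ℝ} {a b k m : ℝ} (hab : a ≤ b)
    (h : ∀ x ∈ Set.Ioo a b, f x = k + m * x) :
    IntervalIntegrable f volume a b ∧
      ∫ x in a..b, f x = k * (b - a) + m * ((b ^ 2 - a ^ 2) / 2) :=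
  ⟨seg_int hab h, seg_val hab h⟩

lemma II_whole {f : ℝ → ℝ}
    (h0 : IntervalIntegrable f volume 0 (1/8)) (h1 : IntervalIntegrable f volume (1/8) (2/8))
    (h2 : IntervalIntegrable f volume (2/8) (3/8)) (h3 : IntervalIntegrable f volume (3/8) (4/8))
    (h4 : IntervalIntegrable f volume (4/8) (5/8)) (h5 : IntervalIntegrable f volume (5/8) (6/8))
    (h6 : IntervalIntegrable f volume (6/8) (7/8)) (h7 : IntervalIntegrable f volume (7/8) 1) :
    IntervalIntegrable f volume 0 1 :=
  ((((((h0.trans h1).trans h2).trans h3).trans h4).trans h5).trans h6).trans h7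

lemma integral_whole {f : ℝ → ℝ}
    (h0 : IntervalIntegrable f volume 0 (1/8)) (h1 : IntervalIntegrable f volume (1/8) (2/8))
    (h2 : IntervalIntegrable f volume (2/8) (3/8)) (h3 : IntervalIntegrable f volume (3/8) (4/8))
    (h4 : IntervalIntegrable f volume (4/8) (5/8)) (h5 : IntervalIntegrable f volume (5/8) (6/8))
    (h6 : IntervalIntegrable f volume (6/8) (7/8)) (h7 : IntervalIntegrable f volume (7/8) 1) :
    ∫ x in (0:ℝ)..1, f x =
      (∫ x in (0:ℝ)..(1/8), f x) + (∫ x in (1/8:ℝ)..(2/8), f x) + (∫ x in (2/8:ℝ)..(3/8), f x) +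
      (∫ x in (3/8:ℝ)..(4/8), f x) + (∫ x in (4/8:ℝ)..(5/8), f x) + (∫ x in (5/8:ℝ)..(6/8), f x) +
      (∫ x in (6/8:ℝ)..(7/8), f x) + ∫ x in (7/8:ℝ)..1, f x := by
  rw [← intervalIntegral.integral_add_adjacent_intervals
      ((((((h0.trans h1).trans h2).trans h3).trans h4).trans h5).trans h6) h7,
    ← intervalIntegral.integral_add_adjacent_intervals
      (((((h0.trans h1).trans h2).trans h3).trans h4).trans h5) h6,
    ← intervalIntegral.integral_add_adjacent_intervals
      ((((h0.trans h1).trans h2).trans h3).trans h4) h5,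
    ← intervalIntegral.integral_add_adjacent_intervals (((h0.trans h1).trans h2).trans h3) h4,
    ← intervalIntegral.integral_add_adjacent_intervals ((h0.trans h1).trans h2) h3,
    ← intervalIntegral.integral_add_adjacent_intervals (h0.trans h1) h2,
    ← intervalIntegral.integral_add_adjacent_intervals h0 h1]

/-! ### Initial values and FTC -/

lemma X0 : X c 0 = 0 := by rw [Xval0 c le_rfl (by norm_num)]; ring

lemma Y0 : Y d 0 = 0 := Yval0 d (by norm_num)

lemma U_II : IntervalIntegrable (U c) volume 0 1 := by
  refine II_whole
    (seg_int (k := c 0) (m := 0) (by norm_num) fun x hx => by rw [Uval0 c hx.2]; ring)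
    (seg_int (k := 0) (m := 0) (by norm_num) fun x hx => by rw [Uval1 c hx.1.le hx.2]; ring)
    (seg_int (k := c 1) (m := 0) (by norm_num) fun x hx => by rw [Uval2 c hx.1.le hx.2]; ring)
    (seg_int (k := 0) (m := 0) (by norm_num) fun x hx => by rw [Uval3 c hx.1.le hx.2]; ring)
    (seg_int (k := c 2) (m := 0) (by norm_num) fun x hx => by rw [Uval4 c hx.1.le hx.2]; ring)
    (seg_int (k := 0) (m := 0) (by norm_num) fun x hx => by rw [Uval5 c hx.1.le hx.2]; ring)
    (seg_int (k := c 3) (m := 0) (by norm_num) fun x hx => by rw [Uval6 c hx.1.le hx.2]; ring)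
    (seg_int (k := 0) (m := 0) (by norm_num) fun x hx => by rw [Uval7 c hx.1.le]; ring)

lemma V_II : IntervalIntegrable (V d) volume 0 1 := by
  refine II_whole
    (seg_int (k := 0) (m := 0) (by norm_num) fun x hx => by rw [Vval0 d hx.2]; ring)
    (seg_int (k := d 0) (m := 0) (by norm_num) fun x hx => by rw [Vval1 d hx.1.le hx.2]; ring)
    (seg_int (k := 0) (m := 0) (by norm_num) fun x hx => by rw [Vval2 d hx.1.le hx.2]; ring)
    (seg_int (k := d 1) (m := 0) (by norm_num) fun x hx => by rw [Vval3 d hx.1.le hx.2]; ring)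
    (seg_int (k := 0) (m := 0) (by norm_num) fun x hx => by rw [Vval4 d hx.1.le hx.2]; ring)
    (seg_int (k := d 2) (m := 0) (by norm_num) fun x hx => by rw [Vval5 d hx.1.le hx.2]; ring)
    (seg_int (k := 0) (m := 0) (by norm_num) fun x hx => by rw [Vval6 d hx.1.le hx.2]; ring)
    (seg_int (k := d 3) (m := 0) (by norm_num) fun x hx => by rw [Vval7 d hx.1.le]; ring)

lemma X_FTC {t : ℝ} (h0 : 0 ≤ t) (h1 : t ≤ 1) : ∫ s in (0:ℝ)..t, U c s = X c t := by
  have hint : IntervalIntegrable (U c) volume 0 t :=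
    (U_II c).mono_set (by
      rw [Set.uIcc_of_le h0, Set.uIcc_of_le (by norm_num : (0:ℝ) ≤ 1)]
      exact Set.Icc_subset_Icc le_rfl h1)
  have hder : ∀ x ∈ Set.Ioo (0:ℝ) t, HasDerivWithinAt (X c) (U c x) (Set.Ioi x) x :=
    fun x hx => U_deriv c hx.1.le (lt_of_lt_of_le hx.2 h1)
  have := intervalIntegral.integral_eq_sub_of_hasDeriv_right_of_le h0
    ((X_cont c).continuousOn) hder hint
  rw [this, X0 c, sub_zero]

lemma Y_FTC {t : ℝ} (h0 : 0 ≤ t) (h1 : t ≤ 1) : ∫ s in (0:ℝ)..t, V d s = Y d t := by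
  have hint : IntervalIntegrable (V d) volume 0 t :=
    (V_II d).mono_set (by
      rw [Set.uIcc_of_le h0, Set.uIcc_of_le (by norm_num : (0:ℝ) ≤ 1)]
      exact Set.Icc_subset_Icc le_rfl h1)
  have hder : ∀ x ∈ Set.Ioo (0:ℝ) t, HasDerivWithinAt (Y d) (V d x) (Set.Ioi x) x :=
    fun x hx => V_deriv d hx.1.le (lt_of_lt_of_le hx.2 h1)
  have := intervalIntegral.integral_eq_sub_of_hasDeriv_right_of_le h0
    ((Y_cont d).continuousOn) hder hint
  rw [this, Y0 d, sub_zero]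

/-! ### The three nontrivial integrals -/

lemma f2_calc :
    IntervalIntegrable (fun s => -(V d s * X c s)) volume 0 1 ∧
    ∫ s in (0:ℝ)..1, -(V d s * X c s) =
      -(d 0 * c 0 + d 1 * (c 0 + c 1) + d 2 * (c 0 + c 1 + c 2) +
        d 3 * (c 0 + c 1 + c 2 + c 3)) / 64 := by
  have s0 := seg_both (f := fun s => -(V d s * X c s)) (a := 0) (b := 1/8)
    (k := 0) (m := 0) (by norm_num) (fun x hx => by simp only [Vval0 d hx.2]; ring)
  have s1 := seg_both (f := fun s => -(V d s * X c s)) (a := 1/8) (b := 2/8)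
    (k := -(d 0 * (c 0 / 8))) (m := 0) (by norm_num)
    (fun x hx => by simp only [Vval1 d hx.1.le hx.2, Xval1 c hx.1.le hx.2.le]; ring)
  have s2 := seg_both (f := fun s => -(V d s * X c s)) (a := 2/8) (b := 3/8)
    (k := 0) (m := 0) (by norm_num) (fun x hx => by simp only [Vval2 d hx.1.le hx.2]; ring)
  have s3 := seg_both (f := fun s => -(V d s * X c s)) (a := 3/8) (b := 4/8)
    (k := -(d 1 * ((c 0 + c 1) / 8))) (m := 0) (by norm_num)
    (fun x hx => by simp only [Vval3 d hx.1.le hx.2, Xval3 c hx.1.le hx.2.le]; ring)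
  have s4 := seg_both (f := fun s => -(V d s * X c s)) (a := 4/8) (b := 5/8)
    (k := 0) (m := 0) (by norm_num) (fun x hx => by simp only [Vval4 d hx.1.le hx.2]; ring)
  have s5 := seg_both (f := fun s => -(V d s * X c s)) (a := 5/8) (b := 6/8)
    (k := -(d 2 * ((c 0 + c 1 + c 2) / 8))) (m := 0) (by norm_num)
    (fun x hx => by simp only [Vval5 d hx.1.le hx.2, Xval5 c hx.1.le hx.2.le]; ring)
  have s6 := seg_both (f := fun s => -(V d s * X c s)) (a := 6/8) (b := 7/8)
    (k := 0) (m := 0) (by norm_num) (fun x hx => by simp only [Vval6 d hx.1.le hx.2]; ring)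
  have s7 := seg_both (f := fun s => -(V d s * X c s)) (a := 7/8) (b := 1)
    (k := -(d 3 * ((c 0 + c 1 + c 2 + c 3) / 8))) (m := 0) (by norm_num)
    (fun x hx => by simp only [Vval7 d hx.1.le, Xval7 c hx.1.le]; ring)
  refine ⟨II_whole s0.1 s1.1 s2.1 s3.1 s4.1 s5.1 s6.1 s7.1, ?_⟩
  rw [integral_whole s0.1 s1.1 s2.1 s3.1 s4.1 s5.1 s6.1 s7.1,
    s0.2, s1.2, s2.2, s3.2, s4.2, s5.2, s6.2, s7.2]
  ring

lemma f3_calc :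
    IntervalIntegrable (fun s => 1/2 * V d s * X c s ^ 2) volume 0 1 ∧
    ∫ s in (0:ℝ)..1, 1/2 * V d s * X c s ^ 2 =
      (d 0 * c 0 ^ 2 + d 1 * (c 0 + c 1) ^ 2 + d 2 * (c 0 + c 1 + c 2) ^ 2 +
        d 3 * (c 0 + c 1 + c 2 + c 3) ^ 2) / 1024 := by
  have s0 := seg_both (f := fun s => 1/2 * V d s * X c s ^ 2) (a := 0) (b := 1/8)
    (k := 0) (m := 0) (by norm_num) (fun x hx => by simp only [Vval0 d hx.2]; ring)
  have s1 := seg_both (f := fun s => 1/2 * V d s * X c s ^ 2) (a := 1/8) (b := 2/8)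
    (k := 1/2 * d 0 * (c 0 / 8) ^ 2) (m := 0) (by norm_num)
    (fun x hx => by simp only [Vval1 d hx.1.le hx.2, Xval1 c hx.1.le hx.2.le]; ring)
  have s2 := seg_both (f := fun s => 1/2 * V d s * X c s ^ 2) (a := 2/8) (b := 3/8)
    (k := 0) (m := 0) (by norm_num) (fun x hx => by simp only [Vval2 d hx.1.le hx.2]; ring)
  have s3 := seg_both (f := fun s => 1/2 * V d s * X c s ^ 2) (a := 3/8) (b := 4/8)
    (k := 1/2 * d 1 * ((c 0 + c 1) / 8) ^ 2) (m := 0) (by norm_num)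
    (fun x hx => by simp only [Vval3 d hx.1.le hx.2, Xval3 c hx.1.le hx.2.le]; ring)
  have s4 := seg_both (f := fun s => 1/2 * V d s * X c s ^ 2) (a := 4/8) (b := 5/8)
    (k := 0) (m := 0) (by norm_num) (fun x hx => by simp only [Vval4 d hx.1.le hx.2]; ring)
  have s5 := seg_both (f := fun s => 1/2 * V d s * X c s ^ 2) (a := 5/8) (b := 6/8)
    (k := 1/2 * d 2 * ((c 0 + c 1 + c 2) / 8) ^ 2) (m := 0) (by norm_num)
    (fun x hx => by simp only [Vval5 d hx.1.le hx.2, Xval5 c hx.1.le hx.2.le]; ring)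
  have s6 := seg_both (f := fun s => 1/2 * V d s * X c s ^ 2) (a := 6/8) (b := 7/8)
    (k := 0) (m := 0) (by norm_num) (fun x hx => by simp only [Vval6 d hx.1.le hx.2]; ring)
  have s7 := seg_both (f := fun s => 1/2 * V d s * X c s ^ 2) (a := 7/8) (b := 1)
    (k := 1/2 * d 3 * ((c 0 + c 1 + c 2 + c 3) / 8) ^ 2) (m := 0) (by norm_num)
    (fun x hx => by simp only [Vval7 d hx.1.le, Xval7 c hx.1.le]; ring)
  refine ⟨II_whole s0.1 s1.1 s2.1 s3.1 s4.1 s5.1 s6.1 s7.1, ?_⟩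
  rw [integral_whole s0.1 s1.1 s2.1 s3.1 s4.1 s5.1 s6.1 s7.1,
    s0.2, s1.2, s2.2, s3.2, s4.2, s5.2, s6.2, s7.2]
  ring

lemma f4_calc :
    IntervalIntegrable (fun s => V d s * X c s * Y d s) volume 0 1 ∧
    ∫ s in (0:ℝ)..1, V d s * X c s * Y d s =
      d 0 * (c 0 / 8) * (d 0 / 128) + d 1 * ((c 0 + c 1) / 8) * (d 0 / 64 + d 1 / 128) +
      d 2 * ((c 0 + c 1 + c 2) / 8) * ((d 0 + d 1) / 64 + d 2 / 128) +
      d 3 * ((c 0 + c 1 + c 2 + c 3) / 8) * ((d 0 + d 1 + d 2) / 64 + d 3 / 128) := by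
  have s0 := seg_both (f := fun s => V d s * X c s * Y d s) (a := 0) (b := 1/8)
    (k := 0) (m := 0) (by norm_num) (fun x hx => by simp only [Vval0 d hx.2]; ring)
  have s1 := seg_both (f := fun s => V d s * X c s * Y d s) (a := 1/8) (b := 2/8)
    (k := -(d 0 * (c 0 / 8) * (d 0 / 8))) (m := d 0 * (c 0 / 8) * d 0) (by norm_num)
    (fun x hx => by
      simp only [Vval1 d hx.1.le hx.2, Xval1 c hx.1.le hx.2.le, Yval1 d hx.1.le hx.2.le]; ring)
  have s2 := seg_both (f := fun s => V d s * X c s * Y d s) (a := 2/8) (b := 3/8)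
    (k := 0) (m := 0) (by norm_num) (fun x hx => by simp only [Vval2 d hx.1.le hx.2]; ring)
  have s3 := seg_both (f := fun s => V d s * X c s * Y d s) (a := 3/8) (b := 4/8)
    (k := d 1 * ((c 0 + c 1) / 8) * (d 0 / 8 - d 1 * (3/8)))
    (m := d 1 * ((c 0 + c 1) / 8) * d 1) (by norm_num)
    (fun x hx => by
      simp only [Vval3 d hx.1.le hx.2, Xval3 c hx.1.le hx.2.le, Yval3 d hx.1.le hx.2.le]; ring)
  have s4 := seg_both (f := fun s => V d s * X c s * Y d s) (a := 4/8) (b := 5/8)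
    (k := 0) (m := 0) (by norm_num) (fun x hx => by simp only [Vval4 d hx.1.le hx.2]; ring)
  have s5 := seg_both (f := fun s => V d s * X c s * Y d s) (a := 5/8) (b := 6/8)
    (k := d 2 * ((c 0 + c 1 + c 2) / 8) * ((d 0 + d 1) / 8 - d 2 * (5/8)))
    (m := d 2 * ((c 0 + c 1 + c 2) / 8) * d 2) (by norm_num)
    (fun x hx => by
      simp only [Vval5 d hx.1.le hx.2, Xval5 c hx.1.le hx.2.le, Yval5 d hx.1.le hx.2.le]; ring)
  have s6 := seg_both (f := fun s => V d s * X c s * Y d s) (a := 6/8) (b := 7/8)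
    (k := 0) (m := 0) (by norm_num) (fun x hx => by simp only [Vval6 d hx.1.le hx.2]; ring)
  have s7 := seg_both (f := fun s => V d s * X c s * Y d s) (a := 7/8) (b := 1)
    (k := d 3 * ((c 0 + c 1 + c 2 + c 3) / 8) * ((d 0 + d 1 + d 2) / 8 - d 3 * (7/8)))
    (m := d 3 * ((c 0 + c 1 + c 2 + c 3) / 8) * d 3) (by norm_num)
    (fun x hx => by
      simp only [Vval7 d hx.1.le, Xval7 c hx.1.le, Yval7 d hx.1.le hx.2.le]; ring)
  refine ⟨II_whole s0.1 s1.1 s2.1 s3.1 s4.1 s5.1 s6.1 s7.1, ?_⟩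
  rw [integral_whole s0.1 s1.1 s2.1 s3.1 s4.1 s5.1 s6.1 s7.1,
    s0.2, s1.2, s2.2, s3.2, s4.2, s5.2, s6.2, s7.2]
  ring

lemma len_calc :
    IntervalIntegrable (fun s => Real.sqrt (U c s ^ 2 + V d s ^ 2)) volume 0 1 ∧
    ∫ s in (0:ℝ)..1, Real.sqrt (U c s ^ 2 + V d s ^ 2) =
      (|c 0| + |d 0| + |c 1| + |d 1| + |c 2| + |d 2| + |c 3| + |d 3|) / 8 := by
  have s0 := seg_both (f := fun s => Real.sqrt (U c s ^ 2 + V d s ^ 2)) (a := 0) (b := 1/8)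
    (k := |c 0|) (m := 0) (by norm_num)
    (fun x hx => by simp only [Uval0 c hx.2, Vval0 d hx.2]; norm_num [Real.sqrt_sq_eq_abs])
  have s1 := seg_both (f := fun s => Real.sqrt (U c s ^ 2 + V d s ^ 2)) (a := 1/8) (b := 2/8)
    (k := |d 0|) (m := 0) (by norm_num)
    (fun x hx => by
      simp only [Uval1 c hx.1.le hx.2, Vval1 d hx.1.le hx.2]; norm_num [Real.sqrt_sq_eq_abs])
  have s2 := seg_both (f := fun s => Real.sqrt (U c s ^ 2 + V d s ^ 2)) (a := 2/8) (b := 3/8)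
    (k := |c 1|) (m := 0) (by norm_num)
    (fun x hx => by
      simp only [Uval2 c hx.1.le hx.2, Vval2 d hx.1.le hx.2]; norm_num [Real.sqrt_sq_eq_abs])
  have s3 := seg_both (f := fun s => Real.sqrt (U c s ^ 2 + V d s ^ 2)) (a := 3/8) (b := 4/8)
    (k := |d 1|) (m := 0) (by norm_num)
    (fun x hx => by
      simp only [Uval3 c hx.1.le hx.2, Vval3 d hx.1.le hx.2]; norm_num [Real.sqrt_sq_eq_abs])
  have s4 := seg_both (f := fun s => Real.sqrt (U c s ^ 2 + V d s ^ 2)) (a := 4/8) (b := 5/8)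
    (k := |c 2|) (m := 0) (by norm_num)
    (fun x hx => by
      simp only [Uval4 c hx.1.le hx.2, Vval4 d hx.1.le hx.2]; norm_num [Real.sqrt_sq_eq_abs])
  have s5 := seg_both (f := fun s => Real.sqrt (U c s ^ 2 + V d s ^ 2)) (a := 5/8) (b := 6/8)
    (k := |d 2|) (m := 0) (by norm_num)
    (fun x hx => by
      simp only [Uval5 c hx.1.le hx.2, Vval5 d hx.1.le hx.2]; norm_num [Real.sqrt_sq_eq_abs])
  have s6 := seg_both (f := fun s => Real.sqrt (U c s ^ 2 + V d s ^ 2)) (a := 6/8) (b := 7/8)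
    (k := |c 3|) (m := 0) (by norm_num)
    (fun x hx => by
      simp only [Uval6 c hx.1.le hx.2, Vval6 d hx.1.le hx.2]; norm_num [Real.sqrt_sq_eq_abs])
  have s7 := seg_both (f := fun s => Real.sqrt (U c s ^ 2 + V d s ^ 2)) (a := 7/8) (b := 1)
    (k := |d 3|) (m := 0) (by norm_num)
    (fun x hx => by simp only [Uval7 c hx.1.le, Vval7 d hx.1.le]; norm_num [Real.sqrt_sq_eq_abs])
  refine ⟨II_whole s0.1 s1.1 s2.1 s3.1 s4.1 s5.1 s6.1 s7.1, ?_⟩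
  rw [integral_whole s0.1 s1.1 s2.1 s3.1 s4.1 s5.1 s6.1 s7.1,
    s0.2, s1.2, s2.2, s3.2, s4.2, s5.2, s6.2, s7.2]
  ring

/-! ### The curve and its derivative -/

def G (t : ℝ) : Fin 5 → ℝ :=
  ![U c t, V d t, -(V d t * X c t), 1/2 * V d t * X c t ^ 2, V d t * X c t * Y d t]

def Crv (t : ℝ) : Fin 5 → ℝ :=
  ![X c t, Y d t, ∫ s in (0:ℝ)..t, -(V d s * X c s),
    ∫ s in (0:ℝ)..t, 1/2 * V d s * X c s ^ 2, ∫ s in (0:ℝ)..t, V d s * X c s * Y d s]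

lemma main (c d : Fin 4 → ℝ) :
    IsHorizontalOn 0 1 (Crv c d) (G c d) ∧ Crv c d 0 = 0 ∧
    Crv c d 1 = ![(c 0 + c 1 + c 2 + c 3) / 8, (d 0 + d 1 + d 2 + d 3) / 8,
      -(d 0 * c 0 + d 1 * (c 0 + c 1) + d 2 * (c 0 + c 1 + c 2) +
        d 3 * (c 0 + c 1 + c 2 + c 3)) / 64,
      (d 0 * c 0 ^ 2 + d 1 * (c 0 + c 1) ^ 2 + d 2 * (c 0 + c 1 + c 2) ^ 2 +
        d 3 * (c 0 + c 1 + c 2 + c 3) ^ 2) / 1024,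
      d 0 * (c 0 / 8) * (d 0 / 128) + d 1 * ((c 0 + c 1) / 8) * (d 0 / 64 + d 1 / 128) +
        d 2 * ((c 0 + c 1 + c 2) / 8) * ((d 0 + d 1) / 64 + d 2 / 128) +
        d 3 * ((c 0 + c 1 + c 2 + c 3) / 8) * ((d 0 + d 1 + d 2) / 64 + d 3 / 128)] ∧
    hLength (G c d) = (|c 0| + |d 0| + |c 1| + |d 1| + |c 2| + |d 2| + |c 3| + |d 3|) / 8 := by
  refine ⟨⟨⟨?_, ?_⟩, ?_⟩, ?_, ?_, ?_⟩
  · -- integrability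
    intro i
    fin_cases i
    · simpa [G] using U_II c
    · simpa [G] using V_II d
    · simpa [G] using (f2_calc c d).1
    · simpa [G] using (f3_calc c d).1
    · simpa [G] using (f4_calc c d).1
  · -- integral identity
    intro t ht i
    fin_cases i
    · show X c t = X c 0 + ∫ s in (0:ℝ)..t, U c s
      rw [X0 c, X_FTC c ht.1 ht.2, zero_add]
    · show Y d t = Y d 0 + ∫ s in (0:ℝ)..t, V d s
      rw [Y0 d, Y_FTC d ht.1 ht.2, zero_add]
    · show (∫ s in (0:ℝ)..t, -(V d s * X c s)) =
        (∫ s in (0:ℝ)..(0:ℝ), -(V d s * X c s)) + _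
      rw [intervalIntegral.integral_same, zero_add]
      rfl
    · show (∫ s in (0:ℝ)..t, 1/2 * V d s * X c s ^ 2) =
        (∫ s in (0:ℝ)..(0:ℝ), 1/2 * V d s * X c s ^ 2) + _
      rw [intervalIntegral.integral_same, zero_add]
      rfl
    · show (∫ s in (0:ℝ)..t, V d s * X c s * Y d s) =
        (∫ s in (0:ℝ)..(0:ℝ), V d s * X c s * Y d s) + _
      rw [intervalIntegral.integral_same, zero_add]
      rfl
  · -- horizontality
    refine Filter.Eventually.of_forall fun t _ => ⟨?_, ?_, ?_⟩
    · show -(V d t * X c t) = -(V d t) * X c t; ring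
    · show 1/2 * V d t * X c t ^ 2 = 1/2 * V d t * X c t ^ 2; rfl
    · show V d t * X c t * Y d t = V d t * X c t * Y d t; rfl
  · -- value at 0
    funext i
    fin_cases i <;>
      simp [Crv, X0, Y0, intervalIntegral.integral_same]
  · -- value at 1
    funext i
    fin_cases i
    · simpa [Crv] using Xval7 c (by norm_num : (7:ℝ)/8 ≤ 1)
    · show Y d 1 = _
      rw [Yval7 d (by norm_num : (7:ℝ)/8 ≤ 1) le_rfl]
      show _ = (d 0 + d 1 + d 2 + d 3) / 8
      ring
    · simpa [Crv] using (f2_calc c d).2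
    · simpa [Crv] using (f3_calc c d).2
    · simpa [Crv] using (f4_calc c d).2
  · -- length
    have hh : ∀ t : ℝ, Real.sqrt ((G c d t 0) ^ 2 + (G c d t 1) ^ 2) =
        Real.sqrt (U c t ^ 2 + V d t ^ 2) := fun t => by simp [G]
    simp only [hLength, hh]
    exact (len_calc c d).2

lemma conclude (lam : ℝ) (p : Fin 5 → ℝ) (c d : Fin 4 → ℝ)
    (hend : Crv c d 1 = p)
    (hlen : (|c 0| + |d 0| + |c 1| + |d 1| + |c 2| + |d 2| + |c 3| + |d 3|) / 8 ≤ 8 * |lam|) :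
    (∃ γ g : ℝ → Fin 5 → ℝ, IsHorizontalOn 0 1 γ g ∧ γ 0 = 0 ∧ γ 1 = p ∧
      hLength g ≤ 8 * |lam|) ∧
    sInf {L : ℝ | ∃ γ g : ℝ → Fin 5 → ℝ,
        IsHorizontalOn 0 1 γ g ∧ γ 0 = 0 ∧ γ 1 = p ∧ L = hLength g} ≤ 8 * |lam| := by
  obtain ⟨hhor, h0, _, hl⟩ := main c d
  have hle : hLength (G c d) ≤ 8 * |lam| := by rw [hl]; exact hlen
  refine ⟨⟨Crv c d, G c d, hhor, h0, hend, hle⟩, ?_⟩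
  have hmem : hLength (G c d) ∈ {L : ℝ | ∃ γ g : ℝ → Fin 5 → ℝ,
      IsHorizontalOn 0 1 γ g ∧ γ 0 = 0 ∧ γ 1 = p ∧ L = hLength g} :=
    ⟨Crv c d, G c d, hhor, h0, hend, rfl⟩
  have hbdd : BddBelow {L : ℝ | ∃ γ g : ℝ → Fin 5 → ℝ,
      IsHorizontalOn 0 1 γ g ∧ γ 0 = 0 ∧ γ 1 = p ∧ L = hLength g} := by
    refine ⟨0, fun L hL => ?_⟩
    obtain ⟨γ, g, _, _, _, rfl⟩ := hL
    exact intervalIntegral.integral_nonneg (by norm_num) fun u _ => Real.sqrt_nonneg _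
  exact (csInf_le hbdd hmem).trans hle

end
end Stmt8Aux

set_option linter.unnecessarySeqFocus false in
/-- Corollary 3.3: for any `λ ∈ ℝ` and any point `p` of the form `(0,0,0,λ³,0)` or
`(0,0,0,0,λ³)`, there is a horizontal curve from `0` to `p` of length at most `8|λ|`;
consequently the Carnot–Carathéodory distance from the origin to `p` (the infimum of
lengths of horizontal curves joining `0` and `p`) is at most `8|λ|`. -/
theorem stmt8 (lam : ℝ) (p : Fin 5 → ℝ)
    (hp : p = ![0, 0, 0, lam ^ 3, 0] ∨ p = ![0, 0, 0, 0, lam ^ 3]) :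
    (∃ γ g : ℝ → Fin 5 → ℝ, IsHorizontalOn 0 1 γ g ∧ γ 0 = 0 ∧ γ 1 = p ∧
      hLength g ≤ 8 * |lam|) ∧
    sInf {L : ℝ | ∃ γ g : ℝ → Fin 5 → ℝ,
        IsHorizontalOn 0 1 γ g ∧ γ 0 = 0 ∧ γ 1 = p ∧ L = hLength g} ≤ 8 * |lam| := by
  rcases hp with hp | hp
  · refine Stmt8Aux.conclude lam p
      ![8*lam, -(8*lam), -(8*lam), 8*lam] ![8*lam, -(8*lam), 8*lam, -(8*lam)] ?_ ?_
    · rw [(Stmt8Aux.main _ _).2.2.1, hp]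
      funext i
      fin_cases i <;> simp <;> ring
    · apply le_of_eq
      simp [abs_mul, abs_neg]
      ring
  · refine Stmt8Aux.conclude lam p
      ![-(8*lam), 8*lam, -(8*lam), 8*lam] ![8*lam, 8*lam, -(8*lam), -(8*lam)] ?_ ?_
    · rw [(Stmt8Aux.main _ _).2.2.1, hp]
      funext i
      fin_cases i <;> simp <;> ring
    · apply le_of_eq
      simp [abs_mul, abs_neg]
      ring
end

section
/- Let n ≥ 1, let η : ℝ → ℝⁿ be a Lipschitz curve (with respect to the Euclidean metrics), and let E ⊂ η(ℝ) be a Borel set whose 1-dimensional Hausdorff measure (with respect to the Euclidean metric on ℝⁿ) is strictly positive. Then the set T := {t ∈ η⁻¹(E) : η is differentiable at t and η′(t) ≠ 0} is Borel measurable and has strictly positive Lebesgue measure. -/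
open MeasureTheory
open scoped ENNReal NNReal

lemma aux_ennreal_zero {a : ℝ≥0∞} {C : ℝ≥0}
    (h : ∀ ε : ℝ≥0, 0 < ε → a ≤ (ε : ℝ≥0∞) * C) : a = 0 := by
  refine nonpos_iff_eq_zero.1 ?_
  refine ENNReal.le_of_forall_pos_le_add fun ε hε _ => ?_
  rw [zero_add]
  calc a ≤ ((ε / (C + 1) : ℝ≥0) : ℝ≥0∞) * C := h _ (by positivity)
    _ ≤ (ε : ℝ≥0∞) := by
        rw [← ENNReal.coe_mul, ENNReal.coe_le_coe]
        calc ε / (C + 1) * C ≤ ε / (C + 1) * (C + 1) := by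
              exact mul_le_mul_right (le_add_of_nonneg_right zero_le_one) _
          _ ≤ ε := by rw [div_mul_cancel₀]; positivity

lemma sard_zero_deriv {F : Type*} [NormedAddCommGroup F] [NormedSpace ℝ F]
    [MeasurableSpace F] [BorelSpace F] (η : ℝ → F) (M : ℕ) :
    μH[1] (η '' ({t : ℝ | HasDerivAt η 0 t} ∩ Set.Icc (-(M:ℝ)) (M:ℝ))) = 0 := by
  set Z : Set ℝ := {t : ℝ | HasDerivAt η 0 t} ∩ Set.Icc (-(M:ℝ)) (M:ℝ) with hZdef
  apply aux_ennreal_zero (C := 2*M+1)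
  intro ε hε
  set Zk : ℕ → Set ℝ := fun k =>
    {t ∈ Z | ∀ s : ℝ, |s - t| ≤ ((k:ℝ)+1)⁻¹ → ‖η s - η t‖ ≤ ε * |s - t|} with hZkdef
  -- Z is covered by the Zk
  have hZsub : Z ⊆ ⋃ k, Zk k := by
    intro t ht
    have hd : HasDerivAt η 0 t := ht.1
    have hlo := hasDerivAt_iff_isLittleO.1 hd
    have hev := hlo.def (show (0:ℝ) < ε from hε)
    simp only [smul_zero, sub_zero, Real.norm_eq_abs] at hev
    rcases Metric.eventually_nhds_iff.1 hev with ⟨δ, hδ, hball⟩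
    rcases exists_nat_one_div_lt hδ with ⟨k, hk⟩
    refine Set.mem_iUnion.2 ⟨k, ht, fun s hs => ?_⟩
    refine hball (lt_of_le_of_lt ?_ (by simpa [one_div] using hk))
    simpa [Real.dist_eq] using hs
  have hmono : Monotone Zk := by
    intro k l hkl t ht
    refine ⟨ht.1, fun s hs => ht.2 s (hs.trans ?_)⟩
    have h1 : (0:ℝ) < (k:ℝ) + 1 := by positivity
    have h2 : ((k:ℝ) + 1) ≤ (l:ℝ) + 1 := by
      have : (k:ℝ) ≤ l := by exact_mod_cast hkl
      linarith
    exact inv_anti₀ h1 h2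
  set I : ℕ → ℕ → Set ℝ := fun k j =>
    Set.Icc (-(M:ℝ) + j*((k:ℝ)+1)⁻¹) (-(M:ℝ) + (j+1)*((k:ℝ)+1)⁻¹) with hIdef
  have key : ∀ k, μH[1] (η '' Zk k) ≤ (ε : ℝ≥0∞) * ((2*(M:ℝ≥0)+1 : ℝ≥0)) := by
    intro k
    have hk1 : (0:ℝ) < (k:ℝ) + 1 := by positivity
    have hcov : Zk k ⊆ ⋃ j ∈ Finset.range (2*M*(k+1)+1), I k j := by
      intro t ht
      have htZ : t ∈ Set.Icc (-(M:ℝ)) (M:ℝ) := ht.1.2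
      have ht0 : (0:ℝ) ≤ (t + M) * ((k:ℝ)+1) := by
        have := htZ.1
        nlinarith
      set j : ℕ := ⌊(t + M) * ((k:ℝ)+1)⌋₊ with hjdef
      have hj1 : (j:ℝ) ≤ (t + M) * ((k:ℝ)+1) := Nat.floor_le ht0
      have hj2 : (t + M) * ((k:ℝ)+1) < (j:ℝ) + 1 := Nat.lt_floor_add_one _
      have hjmem : j ∈ Finset.range (2*M*(k+1)+1) := by
        rw [Finset.mem_range, Nat.lt_succ_iff]
        have hle : (t + M) * ((k:ℝ)+1) ≤ ((2*M*(k+1) : ℕ) : ℝ) := by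
          push_cast
          nlinarith [htZ.2]
        have := Nat.floor_le_floor hle
        rwa [Nat.floor_natCast] at this
      refine Set.mem_biUnion hjmem ?_
      have hinv : ((k:ℝ)+1)⁻¹ * ((k:ℝ)+1) = 1 := inv_mul_cancel₀ (ne_of_gt hk1)
      have hinvpos : (0:ℝ) < ((k:ℝ)+1)⁻¹ := by positivity
      constructor
      · nlinarith [mul_le_mul_of_nonneg_right hj1 (le_of_lt hinvpos)]
      · nlinarith [mul_le_mul_of_nonneg_right (le_of_lt hj2) (le_of_lt hinvpos)]
    have hlip : ∀ j, LipschitzOnWith ε η (Zk k ∩ I k j) := by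
      intro j
      apply LipschitzOnWith.of_dist_le_mul
      intro x hx y hy
      have hxy : |x - y| ≤ ((k:ℝ)+1)⁻¹ := by
        have h1 := hx.2.1; have h2 := hx.2.2
        have h3 := hy.2.1; have h4 := hy.2.2
        rw [abs_sub_le_iff]
        constructor <;> nlinarith
      have := hy.1.2 x hxy
      rw [dist_eq_norm, Real.dist_eq]
      exact this
    have hpiece : ∀ j, μH[1] (η '' (Zk k ∩ I k j)) ≤
        (ε : ℝ≥0∞) * ENNReal.ofReal (((k:ℝ)+1)⁻¹) := by
      intro j
      calc μH[1] (η '' (Zk k ∩ I k j))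
          ≤ (ε : ℝ≥0∞) ^ (1:ℝ) * μH[1] (Zk k ∩ I k j) :=
            (hlip j).hausdorffMeasure_image_le zero_le_one
        _ ≤ (ε : ℝ≥0∞) * ENNReal.ofReal (((k:ℝ)+1)⁻¹) := by
            rw [ENNReal.rpow_one]
            apply mul_le_mul_right
            calc μH[1] (Zk k ∩ I k j) ≤ μH[1] (I k j) :=
                  measure_mono Set.inter_subset_right
              _ = volume (I k j) := by rw [MeasureTheory.hausdorffMeasure_real]
              _ = ENNReal.ofReal (((k:ℝ)+1)⁻¹) := by
                  rw [hIdef]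
                  simp only [Real.volume_Icc]
                  congr 1
                  ring
    calc μH[1] (η '' Zk k)
        ≤ μH[1] (⋃ j ∈ Finset.range (2*M*(k+1)+1), η '' (Zk k ∩ I k j)) := by
          apply measure_mono
          intro x hx
          rcases hx with ⟨t, ht, rfl⟩
          rcases Set.mem_iUnion₂.1 (hcov ht) with ⟨j, hj, htj⟩
          exact Set.mem_biUnion hj ⟨t, ⟨ht, htj⟩, rfl⟩
      _ ≤ ∑ j ∈ Finset.range (2*M*(k+1)+1), μH[1] (η '' (Zk k ∩ I k j)) :=
          measure_biUnion_finset_le _ _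
      _ ≤ ∑ _j ∈ Finset.range (2*M*(k+1)+1),
            (ε : ℝ≥0∞) * ENNReal.ofReal (((k:ℝ)+1)⁻¹) :=
          Finset.sum_le_sum fun j _ => hpiece j
      _ = ((2*M*(k+1)+1 : ℕ) : ℝ≥0∞) * ((ε : ℝ≥0∞) * ENNReal.ofReal (((k:ℝ)+1)⁻¹)) := by
          rw [Finset.sum_const, Finset.card_range, nsmul_eq_mul]
      _ ≤ (ε : ℝ≥0∞) * ((2*(M:ℝ≥0)+1 : ℝ≥0)) := by
          rw [← mul_assoc, mul_comm ((2*M*(k+1)+1 : ℕ) : ℝ≥0∞) (ε : ℝ≥0∞), mul_assoc]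
          apply mul_le_mul_right
          rw [show ((2*M*(k+1)+1 : ℕ) : ℝ≥0∞) = ENNReal.ofReal ((2*M*(k+1)+1 : ℕ) : ℝ) from
            (ENNReal.ofReal_natCast _).symm, ← ENNReal.ofReal_mul (by positivity)]
          have : ((2*(M:ℝ≥0)+1 : ℝ≥0) : ℝ≥0∞) = ENNReal.ofReal ((2*(M:ℝ)+1 : ℝ)) := by
            rw [← ENNReal.ofReal_coe_nnreal]
            congr 1
          rw [this]
          apply ENNReal.ofReal_le_ofReal
          push_cast
          have h1 : ((k:ℝ)+1) * ((k:ℝ)+1)⁻¹ = 1 := mul_inv_cancel₀ (ne_of_gt hk1)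
          have h2 : ((k:ℝ)+1)⁻¹ ≤ 1 := by
            rw [inv_le_one_iff₀]
            right; linarith
          nlinarith [h1, h2, Nat.cast_nonneg (α := ℝ) M]
  calc μH[1] (η '' Z) ≤ μH[1] (⋃ k, η '' Zk k) := by
        apply measure_mono
        rw [← Set.image_iUnion]
        exact Set.image_mono hZsub
    _ = ⨆ k, μH[1] (η '' Zk k) :=
        Monotone.measure_iUnion fun k l h => Set.image_mono (hmono h)
    _ ≤ (ε : ℝ≥0∞) * ((2*(M:ℝ≥0)+1 : ℝ≥0)) := iSup_le key


/-- Lemma 5.4 (Euclidean-target form, via Kirchheim's area formula): if `η : ℝ → ℝⁿ` is a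
Lipschitz curve and `E ⊆ η(ℝ)` is Borel with positive 1-dimensional Hausdorff measure, then
`T = {t ∈ η⁻¹(E) : η'(t) exists and η'(t) ≠ 0}` is Borel and has positive Lebesgue measure. -/
theorem stmt14 (n : ℕ) (hn : 1 ≤ n) (η : ℝ → EuclideanSpace ℝ (Fin n)) (L : NNReal)
    (hη : LipschitzWith L η) (E : Set (EuclideanSpace ℝ (Fin n)))
    (hE : MeasurableSet E) (hEsub : E ⊆ Set.range η) (hEpos : 0 < μH[1] E) :
    MeasurableSet {t : ℝ | t ∈ η ⁻¹' E ∧ DifferentiableAt ℝ η t ∧ deriv η t ≠ 0} ∧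
    0 < volume {t : ℝ | t ∈ η ⁻¹' E ∧ DifferentiableAt ℝ η t ∧ deriv η t ≠ 0} := by
  have hηm : Measurable η := hη.continuous.measurable
  set T := {t : ℝ | t ∈ η ⁻¹' E ∧ DifferentiableAt ℝ η t ∧ deriv η t ≠ 0} with hTdef
  have hTmeas : MeasurableSet T := by
    rw [hTdef]
    simp only [Set.setOf_and]
    exact (hηm hE).inter ((measurableSet_of_differentiableAt ℝ η).inter
      ((measurable_deriv η) (measurableSet_singleton 0).compl))
  refine ⟨hTmeas, ?_⟩
  by_contra hvol
  have hT0 : volume T = 0 := by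
    rcases eq_or_lt_of_le (zero_le : 0 ≤ volume T) with h | h
    · exact h.symm
    · exact absurd h hvol
  -- E is covered by three kinds of null images
  set N : Set ℝ := {t : ℝ | ¬ DifferentiableAt ℝ η t} with hNdef
  set Z : Set ℝ := {t : ℝ | HasDerivAt η 0 t} with hZdef
  have hcover : E ⊆ η '' T ∪ η '' N ∪ ⋃ (M : ℕ), η '' (Z ∩ Set.Icc (-(M:ℝ)) (M:ℝ)) := by
    intro x hx
    rcases hEsub hx with ⟨t, rfl⟩
    by_cases hdiff : DifferentiableAt ℝ η t
    · by_cases hder : deriv η t = 0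
      · right
        have hZt : t ∈ Z := by
          rw [hZdef]
          have := hdiff.hasDerivAt
          rwa [hder] at this
        refine Set.mem_iUnion.2 ⟨⌈|t|⌉₊, ⟨t, ⟨hZt, ?_⟩, rfl⟩⟩
        have h1 : |t| ≤ (⌈|t|⌉₊ : ℝ) := Nat.le_ceil _
        constructor
        · linarith [neg_abs_le t]
        · linarith [le_abs_self t]
      · left; left
        exact ⟨t, ⟨hx, hdiff, hder⟩, rfl⟩
    · left; right
      exact ⟨t, hdiff, rfl⟩
  have himg : ∀ s : Set ℝ, volume s = 0 → μH[1] (η '' s) = 0 := by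
    intro s hs
    have h1 := hη.hausdorffMeasure_image_le zero_le_one s
    rw [ENNReal.rpow_one, MeasureTheory.hausdorffMeasure_real, hs, mul_zero] at h1
    exact nonpos_iff_eq_zero.1 h1
  have hN0 : volume N = 0 := hη.ae_differentiableAt
  have hE0 : μH[1] E = 0 := by
    refine nonpos_iff_eq_zero.1 ?_
    calc μH[1] E ≤ μH[1] (η '' T ∪ η '' N ∪ ⋃ (M : ℕ), η '' (Z ∩ Set.Icc (-(M:ℝ)) (M:ℝ))) :=
          measure_mono hcover
      _ ≤ μH[1] (η '' T ∪ η '' N) + μH[1] (⋃ (M : ℕ), η '' (Z ∩ Set.Icc (-(M:ℝ)) (M:ℝ))) :=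
          measure_union_le _ _
      _ ≤ (μH[1] (η '' T) + μH[1] (η '' N)) + ∑' (M : ℕ), μH[1] (η '' (Z ∩ Set.Icc (-(M:ℝ)) (M:ℝ))) := by
          gcongr
          · exact measure_union_le _ _
          · exact measure_iUnion_le _
      _ = 0 := by
          rw [himg T hT0, himg N hN0]
          simp only [add_zero, zero_add]
          have : ∀ M : ℕ, μH[1] (η '' (Z ∩ Set.Icc (-(M:ℝ)) (M:ℝ))) = 0 :=
            fun M => sard_zero_deriv η M
          simp [this]
  exact absurd hEpos (by rw [hE0]; exact lt_irrefl 0)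
end
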